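/- arXiv:0911.4098 — 3 statements merged into one kernel-verified Lean document; each statement's English description precedes it below -/
import Mathlib

section
/- Suppose $\jump{\rho_0}=\rho_0^+-\rho_0^->0$ and $\rho_0/P'(\rho_0)$ is bounded on $(-m,0)\cup(0,\ell)$. Then there exists $\psi\in H^1_0((-m,\ell))$ with $\psi(0)=1$ such that $\tilde E(\psi):=\int_{-m}^{\ell} g\,\rho_0\,\psi\,\psi'\,dx_3<0$. In particular, for every $|\xi|>0$, $\inf\{E(\varphi,\psi):(\varphi,\psi)\in\mathcal{A}\}<0$. -/
/-!
Take `ψ = τ²` for the tent `τ(x) = max (1 - |x|/δ) 0`. Then `ψψ' = (ψ²/2)'` integrates to `1/2`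
over `(-m, 0)` and to `-1/2` over `(0, ℓ)`, and it vanishes off `(-δ, δ)`, where the hydrostatic
equation keeps `ρ₀` within `Kδ` (`K = gC/q`) of its one-sided limits. Hence
`∫ ρ₀ψψ' ≤ (ρ₀⁻ - ρ₀⁺)/2 + Kδ < 0` for small `δ`.

For the energy, `φ = -ψ'/ξ` cancels the first term, so `E(φ, ψ) = ∫ gρ₀ψψ' < 0`. Pointwise
`E ≥ -gξ · M`, where `M` is the mass `½∫ρ₀(φ² + ψ²)`; this bounds the infimum from below and forces
`M > 0`, so rescaling `(φ, ψ)` to unit mass gives a negative element of the set.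
-/

open Set Filter Topology MeasureTheory Interval

theorem hasDerivAt_max_zero_sq (t : ℝ) :
    HasDerivAt (fun s : ℝ => max s 0 ^ 2) (2 * max t 0) t := by
  rcases lt_trichotomy t 0 with ht | rfl | ht
  · have hEq : (fun s : ℝ => max s 0 ^ 2) =ᶠ[𝓝 t] fun _ => 0 := by
      filter_upwards [Iio_mem_nhds ht] with s (hs : s < 0)
      simp [hs.le]
    simpa [ht.le] using (hasDerivAt_const t (0 : ℝ)).congr_of_eventuallyEq hEq
  · rw [hasDerivAt_iff_isLittleO, max_self]
    simp only [sub_zero, zero_pow two_ne_zero, mul_zero]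
    refine Asymptotics.IsBigO.trans_isLittleO ?_ (Asymptotics.isLittleO_pow_id one_lt_two)
    refine Asymptotics.IsBigO.of_bound 1 (Eventually.of_forall fun s => ?_)
    rw [one_mul, smul_zero, sub_zero, norm_pow, norm_pow]
    exact pow_le_pow_left₀ (norm_nonneg _) (by simp [abs_le, le_abs_self]) 2
  · have hEq : (fun s : ℝ => max s 0 ^ 2) =ᶠ[𝓝 t] fun s => s ^ 2 := by
      filter_upwards [Ioi_mem_nhds ht] with s (hs : 0 < s)
      simp [hs.le]
    simpa [ht.le, mul_comm] using (hasDerivAt_pow 2 t).congr_of_eventuallyEq hEq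

theorem norm_sub_le_mul_of_tendsto_of_norm_deriv_le {E : Type*} [NormedAddCommGroup E]
    [NormedSpace ℝ E] {f f' : ℝ → E} {s : Set ℝ} {a x K : ℝ} {L : E} (hs : Convex ℝ s)
    (hf : ∀ y ∈ s, HasDerivWithinAt f (f' y) s y) (hf' : ∀ y ∈ s, ‖f' y‖ ≤ K)
    (ha : a ∈ closure s) (hL : Tendsto f (𝓝[s] a) (𝓝 L)) (hx : x ∈ s) :
    ‖f x - L‖ ≤ K * ‖x - a‖ := by
  have := mem_closure_iff_nhdsWithin_neBot.mp ha
  refine le_of_tendsto_of_tendsto (tendsto_const_nhds.sub hL).norm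
    (tendsto_const_nhds.mul (tendsto_const_nhds.sub
      (tendsto_nhdsWithin_of_tendsto_nhds tendsto_id)).norm) ?_
  filter_upwards [self_mem_nhdsWithin] with y hy
  exact hs.norm_image_sub_le_of_norm_hasDerivWithin_le hf hf' hy hx

section Measurability

variable {a b : ℝ}

theorem ae_restrict_uIoc_mem_Ioo (hab : a ≤ b) : ∀ᵐ x ∂volume.restrict (Ι a b), x ∈ Ioo a b := by
  rw [uIoc_of_le hab]
  filter_upwards [ae_restrict_mem measurableSet_Ioc, Measure.ae_ne _ b] with x hx hxb
  exact ⟨hx.1, lt_of_le_of_ne hx.2 hxb⟩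

theorem ContinuousOn.aestronglyMeasurable_uIoc {f : ℝ → ℝ} {c : ℝ} (hab : a ≤ b)
    (hf : ContinuousOn f (Ioo a b \ {c})) : AEStronglyMeasurable f (volume.restrict (Ι a b)) := by
  rw [uIoc_of_le hab, ← Measure.restrict_congr_set Ioo_ae_eq_Ioc,
    ← Measure.restrict_congr_set (sdiff_null_ae_eq_self (measure_singleton c))]
  exact hf.aestronglyMeasurable (measurableSet_Ioo.diff (measurableSet_singleton c))

theorem IntervalIntegrable.bdd_mul_of_Ioo {f ρ : ℝ → ℝ} {C : ℝ} (hab : a ≤ b)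
    (hf : IntervalIntegrable f volume a b) (hρm : AEStronglyMeasurable ρ (volume.restrict (Ι a b)))
    (hρ : ∀ x ∈ Ioo a b, |ρ x| ≤ C) : IntervalIntegrable (fun x => ρ x * f x) volume a b :=
  intervalIntegrable_iff.2 <| (intervalIntegrable_iff.1 hf).bdd_mul hρm <| by
    filter_upwards [ae_restrict_uIoc_mem_Ioo hab] with x hx using hρ x hx

end Measurability

noncomputable def tent (δ x : ℝ) : ℝ := max (1 - |x| / δ) 0

noncomputable def bump (δ x : ℝ) : ℝ := tent δ x ^ 2

section Bump

variable {δ x : ℝ}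

theorem tent_nonneg (δ x : ℝ) : 0 ≤ tent δ x := le_max_right _ _

theorem tent_le_one (hδ : 0 < δ) (x : ℝ) : tent δ x ≤ 1 :=
  max_le (by have := div_nonneg (abs_nonneg x) hδ.le; linarith) zero_le_one

theorem continuous_bump (δ : ℝ) : Continuous (bump δ) := by
  unfold bump tent; fun_prop

@[simp] theorem bump_zero (δ : ℝ) : bump δ 0 = 1 := by simp [bump, tent]

theorem bump_eq_zero (hδ : 0 < δ) (hx : δ ≤ |x|) : bump δ x = 0 := by
  have : 1 - |x| / δ ≤ 0 := by rw [sub_nonpos, one_le_div hδ]; exact hx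
  simp [bump, tent, this]

theorem bump_nonneg (δ x : ℝ) : 0 ≤ bump δ x := sq_nonneg _

theorem bump_le_one (hδ : 0 < δ) (x : ℝ) : bump δ x ≤ 1 :=
  pow_le_one₀ (tent_nonneg δ x) (tent_le_one hδ x)

theorem hasDerivAt_bump (hx : x ≠ 0) :
    HasDerivAt (bump δ) (2 * tent δ x * -(SignType.sign x / δ)) x :=
  (hasDerivAt_max_zero_sq _).comp x (((hasDerivAt_abs hx).div_const δ).const_sub 1)

theorem abs_deriv_bump_le (hδ : 0 < δ) (hx : x ≠ 0) : |deriv (bump δ) x| ≤ 2 / δ := by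
  rw [(hasDerivAt_bump hx).deriv, abs_mul, abs_neg, abs_div, abs_of_pos hδ,
    abs_of_nonneg (by have := tent_nonneg δ x; positivity)]
  have hs : |(SignType.sign x : ℝ)| ≤ 1 := by rcases lt_or_gt_of_ne hx with h | h <;> simp [h]
  have ht := tent_le_one hδ x
  have ht₀ := tent_nonneg δ x
  calc 2 * tent δ x * (|(SignType.sign x : ℝ)| / δ) ≤ 2 * 1 * (1 / δ) := by gcongr
    _ = 2 / δ := by ring

theorem deriv_bump_nonneg (hδ : 0 < δ) (hx : x < 0) : 0 ≤ deriv (bump δ) x := by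
  have := tent_nonneg δ x
  rw [(hasDerivAt_bump hx.ne).deriv, sign_neg hx, SignType.coe_neg_one, neg_div, neg_neg]
  positivity

theorem deriv_bump_nonpos (hδ : 0 < δ) (hx : 0 < x) : deriv (bump δ) x ≤ 0 := by
  have := tent_nonneg δ x
  rw [(hasDerivAt_bump hx.ne').deriv, sign_pos hx, SignType.coe_one, mul_neg, neg_nonpos]
  positivity

theorem intervalIntegrable_deriv_bump_sq (hδ : 0 < δ) (a b : ℝ) :
    IntervalIntegrable (fun x => deriv (bump δ) x ^ 2) volume a b := by
  refine (intervalIntegrable_const (c := (2 / δ) ^ 2)).mono_fun'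
    ((aestronglyMeasurable_deriv _ _).pow 2) (ae_restrict_of_ae ?_)
  filter_upwards [Measure.ae_ne volume 0] with x hx
  rw [Real.norm_eq_abs, abs_pow]
  exact pow_le_pow_left₀ (abs_nonneg _) (abs_deriv_bump_le hδ hx) 2

theorem intervalIntegrable_bump_mul_deriv (hδ : 0 < δ) (a b : ℝ) :
    IntervalIntegrable (fun x => bump δ x * deriv (bump δ) x) volume a b := by
  refine (intervalIntegrable_const (c := 2 / δ)).mono_fun'
    ((continuous_bump δ).aestronglyMeasurable.mul (aestronglyMeasurable_deriv _ _))
    (ae_restrict_of_ae ?_)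
  filter_upwards [Measure.ae_ne volume 0] with x hx
  rw [Real.norm_eq_abs, abs_mul, abs_of_nonneg (bump_nonneg δ x)]
  calc bump δ x * |deriv (bump δ) x| ≤ 1 * (2 / δ) := by
        gcongr
        exacts [bump_le_one hδ x, abs_deriv_bump_le hδ hx]
    _ = 2 / δ := one_mul _

theorem integral_bump_mul_deriv (hδ : 0 < δ) {a b : ℝ} (hab : a ≤ b) (h₀ : (0 : ℝ) ∉ Ioo a b) :
    ∫ x in a..b, bump δ x * deriv (bump δ) x = (bump δ b ^ 2 - bump δ a ^ 2) / 2 := by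
  rw [sub_div]
  refine intervalIntegral.integral_eq_sub_of_hasDerivAt_of_le hab
    (((continuous_bump δ).pow 2).div_const 2).continuousOn (fun x hx => ?_)
    (intervalIntegrable_bump_mul_deriv hδ a b)
  have hd := hasDerivAt_bump (δ := δ) (ne_of_mem_of_not_mem hx h₀)
  exact ((hd.pow 2).div_const 2).congr_deriv (by rw [hd.deriv]; ring)

end Bump

theorem abs_sub_le_of_hydrostatic {ρ Q : ℝ → ℝ} {s : Set ℝ} {g C q L : ℝ} (hs : Convex ℝ s)
    (h₀ : 0 ∈ closure s) (hg : 0 ≤ g) (hq : 0 < q) (hρ : ∀ x ∈ s, 0 ≤ ρ x ∧ ρ x ≤ C)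
    (hQ : ∀ x ∈ s, q ≤ Q x) (hode : ∀ x ∈ s, HasDerivAt ρ (-g * ρ x / Q x) x)
    (hL : Tendsto ρ (𝓝[s] 0) (𝓝 L)) {x : ℝ} (hx : x ∈ s) : |ρ x - L| ≤ g * C / q * |x| := by
  have hderiv : ∀ y ∈ s, ‖-g * ρ y / Q y‖ ≤ g * C / q := fun y hy => by
    rw [norm_div, norm_mul, norm_neg, Real.norm_of_nonneg hg, Real.norm_of_nonneg (hρ y hy).1,
      Real.norm_of_nonneg (hq.le.trans (hQ y hy))]
    have hC := (hρ y hy).1.trans (hρ y hy).2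
    gcongr
    exacts [(hρ y hy).2, hQ y hy]
  simpa using norm_sub_le_mul_of_tendsto_of_norm_deriv_le hs
    (fun y hy => (hode y hy).hasDerivWithinAt) hderiv h₀ hL hx

section JumpEstimate

variable {ρ : ℝ → ℝ} {a δ K L : ℝ}

theorem integral_mul_bump_mul_deriv_le_of_neg (hδ : 0 < δ) (hδa : δ ≤ a) (hK : 0 ≤ K)
    (hρ : ∀ x ∈ Ioo (-a) 0, |ρ x - L| ≤ K * |x|)
    (hint : IntervalIntegrable (fun x => ρ x * (bump δ x * deriv (bump δ) x)) volume (-a) 0) :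
    ∫ x in (-a)..0, ρ x * (bump δ x * deriv (bump δ) x) ≤ (L + K * δ) / 2 := by
  calc ∫ x in (-a)..0, ρ x * (bump δ x * deriv (bump δ) x)
      ≤ ∫ x in (-a)..0, (L + K * δ) * (bump δ x * deriv (bump δ) x) := by
        refine intervalIntegral.integral_mono_on_of_le_Ioo (by linarith) hint
          ((intervalIntegrable_bump_mul_deriv hδ _ _).const_mul _) fun x hx => ?_
        by_cases hxδ : δ ≤ |x|
        · simp [bump_eq_zero hδ hxδ]
        refine mul_le_mul_of_nonneg_right ?_
          (mul_nonneg (bump_nonneg δ x) (deriv_bump_nonneg hδ hx.2))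
        have := (abs_le.1 (hρ x hx)).2
        nlinarith
    _ = (L + K * δ) / 2 := by
        rw [intervalIntegral.integral_const_mul, integral_bump_mul_deriv hδ (by linarith) (by simp),
          bump_zero, bump_eq_zero hδ (by rwa [abs_neg, abs_of_pos (hδ.trans_le hδa)])]
        ring

theorem integral_mul_bump_mul_deriv_le_of_pos (hδ : 0 < δ) (hδa : δ ≤ a) (hK : 0 ≤ K)
    (hρ : ∀ x ∈ Ioo 0 a, |ρ x - L| ≤ K * |x|)
    (hint : IntervalIntegrable (fun x => ρ x * (bump δ x * deriv (bump δ) x)) volume 0 a) :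
    ∫ x in (0)..a, ρ x * (bump δ x * deriv (bump δ) x) ≤ -(L - K * δ) / 2 := by
  calc ∫ x in (0)..a, ρ x * (bump δ x * deriv (bump δ) x)
      ≤ ∫ x in (0)..a, (L - K * δ) * (bump δ x * deriv (bump δ) x) := by
        refine intervalIntegral.integral_mono_on_of_le_Ioo (by linarith) hint
          ((intervalIntegrable_bump_mul_deriv hδ _ _).const_mul _) fun x hx => ?_
        by_cases hxδ : δ ≤ |x|
        · simp [bump_eq_zero hδ hxδ]
        refine mul_le_mul_of_nonpos_right ?_
          (mul_nonpos_of_nonneg_of_nonpos (bump_nonneg δ x) (deriv_bump_nonpos hδ hx.1))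
        have := (abs_le.1 (hρ x hx)).1
        nlinarith
    _ = -(L - K * δ) / 2 := by
        rw [intervalIntegral.integral_const_mul, integral_bump_mul_deriv hδ (by linarith) (by simp),
          bump_zero, bump_eq_zero hδ (by rwa [abs_of_pos (hδ.trans_le hδa)])]
        ring

theorem integral_mul_bump_mul_deriv_neg {b L₁ L₂ : ℝ} (hδ : 0 < δ) (hδa : δ ≤ a) (hδb : δ ≤ b)
    (hK : 0 ≤ K) (hjump : 2 * K * δ < L₂ - L₁)
    (h₁ : ∀ x ∈ Ioo (-a) 0, |ρ x - L₁| ≤ K * |x|) (h₂ : ∀ x ∈ Ioo 0 b, |ρ x - L₂| ≤ K * |x|)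
    (hint : IntervalIntegrable (fun x => ρ x * (bump δ x * deriv (bump δ) x)) volume (-a) b) :
    ∫ x in (-a)..b, ρ x * (bump δ x * deriv (bump δ) x) < 0 := by
  have ha : 0 ≤ a := by linarith
  have hb : 0 ≤ b := by linarith
  have hsub : ∀ {c d : ℝ}, -a ≤ c → c ≤ d → d ≤ b → uIcc c d ⊆ uIcc (-a) b := fun hc hcd hd => by
    rw [uIcc_of_le hcd, uIcc_of_le (by linarith)]
    exact Icc_subset_Icc hc hd
  have hint₁ := hint.mono_set (hsub le_rfl (by linarith) hb)
  have hint₂ := hint.mono_set (hsub (by linarith) hb le_rfl)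
  rw [← intervalIntegral.integral_add_adjacent_intervals hint₁ hint₂]
  have := integral_mul_bump_mul_deriv_le_of_neg hδ hδa hK h₁ hint₁
  have := integral_mul_bump_mul_deriv_le_of_pos hδ hδb hK h₂ hint₂
  linarith

end JumpEstimate

section Energy

variable (m ℓ g ξ : ℝ) (ρ Q φ ψ : ℝ → ℝ)

noncomputable def mass : ℝ := (1 / 2) * ∫ x in (-m)..ℓ, ρ x * ((φ x) ^ 2 + (ψ x) ^ 2)

noncomputable def energy : ℝ :=
  (1 / 2) * ∫ x in (-m)..ℓ, (Q x * ρ x * (deriv ψ x + ξ * φ x) ^ 2 - 2 * g * ρ x * ξ * ψ x * φ x)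

def energySet : Set ℝ :=
  {e : ℝ | ∃ φ ψ : ℝ → ℝ,
    ContinuousOn ψ (Icc (-m) ℓ) ∧ ψ (-m) = 0 ∧ ψ ℓ = 0 ∧
    (∀ x ∈ Ioo (-m) ℓ, x ≠ 0 → DifferentiableAt ℝ ψ x) ∧
    IntervalIntegrable (fun x => (φ x) ^ 2) volume (-m) ℓ ∧
    IntervalIntegrable (fun x => (deriv ψ x) ^ 2) volume (-m) ℓ ∧
    mass m ℓ ρ φ ψ = 1 ∧ e = energy m ℓ g ξ ρ Q φ ψ}

variable {m ℓ g ξ ρ Q φ ψ}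

theorem mass_const_mul (c : ℝ) :
    mass m ℓ ρ (fun x => c * φ x) (fun x => c * ψ x) = c ^ 2 * mass m ℓ ρ φ ψ := by
  have h : ∀ x, ρ x * ((c * φ x) ^ 2 + (c * ψ x) ^ 2) = c ^ 2 * (ρ x * (φ x ^ 2 + ψ x ^ 2)) :=
    fun x => by ring
  simp only [mass, h, intervalIntegral.integral_const_mul]
  ring

theorem energy_const_mul (c : ℝ) :
    energy m ℓ g ξ ρ Q (fun x => c * φ x) (fun x => c * ψ x) = c ^ 2 * energy m ℓ g ξ ρ Q φ ψ := by
  have h : ∀ x, Q x * ρ x * (c * deriv ψ x + ξ * (c * φ x)) ^ 2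
      - 2 * g * ρ x * ξ * (c * ψ x) * (c * φ x)
      = c ^ 2 * (Q x * ρ x * (deriv ψ x + ξ * φ x) ^ 2 - 2 * g * ρ x * ξ * ψ x * φ x) :=
    fun x => by ring
  simp only [energy, deriv_const_mul_field', h, intervalIntegral.integral_const_mul]
  ring

theorem neg_mul_mass_le_energy (hmℓ : -m ≤ ℓ) (hg : 0 ≤ g) (hξ : 0 ≤ ξ)
    (hρ : ∀ x ∈ Ioo (-m) ℓ, 0 ≤ ρ x) (hQ : ∀ x ∈ Ioo (-m) ℓ, 0 ≤ Q x)
    (hint : IntervalIntegrable (fun x => ρ x * ((φ x) ^ 2 + (ψ x) ^ 2)) volume (-m) ℓ) :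
    -(g * ξ) * mass m ℓ ρ φ ψ ≤ energy m ℓ g ξ ρ Q φ ψ := by
  by_cases hE : IntervalIntegrable
      (fun x => Q x * ρ x * (deriv ψ x + ξ * φ x) ^ 2 - 2 * g * ρ x * ξ * ψ x * φ x) volume (-m) ℓ
  · rw [mass, energy, ← mul_assoc, mul_comm (-(g * ξ)), mul_assoc,
      ← intervalIntegral.integral_const_mul]
    gcongr
    refine intervalIntegral.integral_mono_on_of_le_Ioo hmℓ (hint.const_mul _) hE fun x hx => ?_
    -- `E + gξ·M = Qρ(ψ' + ξφ)² + gξρ(φ - ψ)²`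
    have := mul_nonneg (mul_nonneg (hQ x hx) (hρ x hx)) (sq_nonneg (deriv ψ x + ξ * φ x))
    have := mul_nonneg (mul_nonneg (mul_nonneg hg hξ) (hρ x hx)) (sq_nonneg (φ x - ψ x))
    nlinarith
  · have hM : 0 ≤ mass m ℓ ρ φ ψ := by
      have := intervalIntegral.integral_mono_on_of_le_Ioo hmℓ intervalIntegrable_const hint
        fun x hx => mul_nonneg (hρ x hx) (by positivity)
      simp only [intervalIntegral.integral_const, smul_zero] at this
      unfold mass; positivity
    rw [energy, intervalIntegral.integral_undef hE, mul_zero]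
    nlinarith [mul_nonneg hg hξ]

theorem bddBelow_energySet (hmℓ : -m ≤ ℓ) (hg : 0 ≤ g) (hξ : 0 ≤ ξ)
    (hρ : ∀ x ∈ Ioo (-m) ℓ, 0 ≤ ρ x) (hQ : ∀ x ∈ Ioo (-m) ℓ, 0 ≤ Q x) :
    BddBelow (energySet m ℓ g ξ ρ Q) := by
  refine ⟨-(g * ξ), ?_⟩
  rintro e ⟨φ, ψ, -, -, -, -, -, -, hmass, rfl⟩
  have hint : IntervalIntegrable (fun x => ρ x * ((φ x) ^ 2 + (ψ x) ^ 2)) volume (-m) ℓ := by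
    by_contra h
    simp [mass, intervalIntegral.integral_undef h] at hmass
  simpa [hmass] using neg_mul_mass_le_energy hmℓ hg hξ hρ hQ hint

theorem sInf_energySet_le_energy_div_mass (hmℓ : -m ≤ ℓ) (hg : 0 ≤ g) (hξ : 0 ≤ ξ)
    (hρ : ∀ x ∈ Ioo (-m) ℓ, 0 ≤ ρ x) (hQ : ∀ x ∈ Ioo (-m) ℓ, 0 ≤ Q x)
    (hψc : ContinuousOn ψ (Icc (-m) ℓ)) (hψm : ψ (-m) = 0) (hψℓ : ψ ℓ = 0)
    (hψd : ∀ x ∈ Ioo (-m) ℓ, x ≠ 0 → DifferentiableAt ℝ ψ x)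
    (hφi : IntervalIntegrable (fun x => (φ x) ^ 2) volume (-m) ℓ)
    (hψi : IntervalIntegrable (fun x => (deriv ψ x) ^ 2) volume (-m) ℓ)
    (hM : 0 < mass m ℓ ρ φ ψ) :
    sInf (energySet m ℓ g ξ ρ Q) ≤ energy m ℓ g ξ ρ Q φ ψ / mass m ℓ ρ φ ψ := by
  set c := (√(mass m ℓ ρ φ ψ))⁻¹
  have hc : c ^ 2 = (mass m ℓ ρ φ ψ)⁻¹ := by rw [inv_pow, Real.sq_sqrt hM.le]
  refine csInf_le (bddBelow_energySet hmℓ hg hξ hρ hQ)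
    ⟨fun x => c * φ x, fun x => c * ψ x, continuousOn_const.mul hψc, by simp [hψm],
      by simp [hψℓ], fun x hx hx0 => (hψd x hx hx0).const_mul c, ?_, ?_, ?_, ?_⟩
  · simpa only [mul_pow] using hφi.const_mul (c ^ 2)
  · simpa only [deriv_const_mul_field', mul_pow] using hψi.const_mul (c ^ 2)
  · rw [mass_const_mul, hc, inv_mul_cancel₀ hM.ne']
  · rw [energy_const_mul, hc, div_eq_inv_mul]

end Energy

theorem sInf_energySet_neg {m ℓ g ξ C : ℝ} {ρ Q ψ : ℝ → ℝ} (hmℓ : -m ≤ ℓ) (hg : 0 < g)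
    (hξ : 0 < ξ) (hρm : AEStronglyMeasurable ρ (volume.restrict (Ι (-m) ℓ)))
    (hρ : ∀ x ∈ Ioo (-m) ℓ, 0 ≤ ρ x ∧ ρ x ≤ C) (hQ : ∀ x ∈ Ioo (-m) ℓ, 0 ≤ Q x)
    (hψc : ContinuousOn ψ (Icc (-m) ℓ)) (hψm : ψ (-m) = 0) (hψℓ : ψ ℓ = 0)
    (hψd : ∀ x ∈ Ioo (-m) ℓ, x ≠ 0 → DifferentiableAt ℝ ψ x)
    (hψi : IntervalIntegrable (fun x => (deriv ψ x) ^ 2) volume (-m) ℓ)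
    (hJ : ∫ x in (-m)..ℓ, g * ρ x * ψ x * deriv ψ x < 0) :
    sInf (energySet m ℓ g ξ ρ Q) < 0 := by
  set φ := fun x => -deriv ψ x / ξ
  have hE : energy m ℓ g ξ ρ Q φ ψ = ∫ x in (-m)..ℓ, g * ρ x * ψ x * deriv ψ x := by
    have h : ∀ x, Q x * ρ x * (deriv ψ x + ξ * φ x) ^ 2 - 2 * g * ρ x * ξ * ψ x * φ x
        = 2 * (g * ρ x * ψ x * deriv ψ x) := fun x => by
      simp only [φ]; field_simp; ring
    simp only [energy, h, intervalIntegral.integral_const_mul]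
    ring
  have hφi : IntervalIntegrable (fun x => (φ x) ^ 2) volume (-m) ℓ := by
    simpa only [φ, div_pow, neg_sq] using hψi.div_const (ξ ^ 2)
  have hMi : IntervalIntegrable (fun x => ρ x * ((φ x) ^ 2 + (ψ x) ^ 2)) volume (-m) ℓ :=
    (hφi.add ((hψc.pow 2).intervalIntegrable_of_Icc hmℓ)).bdd_mul_of_Ioo hmℓ hρm
      fun x hx => abs_le.2 ⟨by linarith [(hρ x hx).1, (hρ x hx).2], (hρ x hx).2⟩
  have hM : 0 < mass m ℓ ρ φ ψ := by
    have := neg_mul_mass_le_energy hmℓ hg.le hξ.le (fun x hx => (hρ x hx).1) hQ hMi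
    nlinarith [mul_pos hg hξ]
  calc sInf (energySet m ℓ g ξ ρ Q) ≤ energy m ℓ g ξ ρ Q φ ψ / mass m ℓ ρ φ ψ :=
        sInf_energySet_le_energy_div_mass hmℓ hg.le hξ.le (fun x hx => (hρ x hx).1) hQ hψc hψm
          hψℓ hψd hφi hψi hM
    _ < 0 := div_neg_of_neg_of_pos (hE ▸ hJ) hM

theorem exists_integral_mul_bump_mul_deriv_neg {m ℓ g q C ρP ρM : ℝ} {ρ Q : ℝ → ℝ} (hm : 0 < m)
    (hℓ : 0 < ℓ) (hg : 0 < g) (hq : 0 < q) (hjump : ρM < ρP)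
    (hρm : AEStronglyMeasurable ρ (volume.restrict (Ι (-m) ℓ)))
    (hρ : ∀ x ∈ Ioo (-m) ℓ, 0 ≤ ρ x ∧ ρ x ≤ C) (hQ : ∀ x ∈ Ioo (-m) ℓ, q ≤ Q x)
    (hode : ∀ x ∈ Ioo (-m) ℓ, x ≠ 0 → HasDerivAt ρ (-g * ρ x / Q x) x)
    (hlimP : Tendsto ρ (𝓝[>] 0) (𝓝 ρP)) (hlimM : Tendsto ρ (𝓝[<] 0) (𝓝 ρM)) :
    ∃ δ, 0 < δ ∧ δ ≤ m ∧ δ ≤ ℓ ∧ ∫ x in (-m)..ℓ, g * ρ x * bump δ x * deriv (bump δ) x < 0 := by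
  set K := g * C / q
  have hK : 0 ≤ K := by
    have := hρ 0 ⟨by linarith, hℓ⟩
    exact div_nonneg (mul_nonneg hg.le (this.1.trans this.2)) hq.le
  have hsubM : Ioo (-m) 0 ⊆ Ioo (-m) ℓ := Ioo_subset_Ioo_right hℓ.le
  have hsubP : Ioo 0 ℓ ⊆ Ioo (-m) ℓ := Ioo_subset_Ioo_left (by linarith)
  have hρM : ∀ x ∈ Ioo (-m) 0, |ρ x - ρM| ≤ K * |x| := fun x =>
    abs_sub_le_of_hydrostatic (convex_Ioo _ _) (by simp [closure_Ioo (by linarith : -m ≠ 0), hm.le])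
      hg.le hq (fun y hy => hρ y (hsubM hy)) (fun y hy => hQ y (hsubM hy))
      (fun y hy => hode y (hsubM hy) hy.2.ne)
      (hlimM.mono_left (nhdsWithin_mono _ Ioo_subset_Iio_self))
  have hρP : ∀ x ∈ Ioo 0 ℓ, |ρ x - ρP| ≤ K * |x| := fun x =>
    abs_sub_le_of_hydrostatic (convex_Ioo _ _) (by simp [closure_Ioo hℓ.ne, hℓ.le])
      hg.le hq (fun y hy => hρ y (hsubP hy)) (fun y hy => hQ y (hsubP hy))
      (fun y hy => hode y (hsubP hy) hy.1.ne')
      (hlimP.mono_left (nhdsWithin_mono _ Ioo_subset_Ioi_self))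
  obtain ⟨ε, hε, hKε⟩ := exists_pos_mul_lt (sub_pos.2 hjump) (2 * K)
  set δ := min (min m ℓ) ε
  have hδ : 0 < δ := lt_min (lt_min hm hℓ) hε
  have hδm : δ ≤ m := (min_le_left _ _).trans (min_le_left _ _)
  have hδℓ : δ ≤ ℓ := (min_le_left _ _).trans (min_le_right _ _)
  have hKδ : 2 * K * δ < ρP - ρM :=
    (mul_le_mul_of_nonneg_left (min_le_right _ _) (by positivity)).trans_lt hKε
  refine ⟨δ, hδ, hδm, hδℓ, ?_⟩
  simp only [mul_assoc]
  rw [intervalIntegral.integral_const_mul]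
  refine mul_neg_of_pos_of_neg hg (integral_mul_bump_mul_deriv_neg hδ hδm hδℓ hK hKδ hρM hρP ?_)
  exact (intervalIntegrable_bump_mul_deriv hδ _ _).bdd_mul_of_Ioo (by linarith) hρm
    fun x hx => abs_le.2 ⟨by linarith [(hρ x hx).1, (hρ x hx).2], (hρ x hx).2⟩

theorem energy_infimum_negative_general
    (m ℓ g : ℝ) (hm : 0 < m) (hℓ : 0 < ℓ) (hg : 0 < g)
    (ρ0 Q : ℝ → ℝ) (rhoP rhoM : ℝ) (hjump : rhoM < rhoP)
    (c C q Q' : ℝ) (hc : 0 < c) (hq : 0 < q)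
    (hρbd : ∀ x ∈ Ioo (-m) ℓ, c ≤ ρ0 x ∧ ρ0 x ≤ C)
    (hQbd : ∀ x ∈ Ioo (-m) ℓ, q ≤ Q x ∧ Q x ≤ Q')
    (hode : ∀ x ∈ Ioo (-m) ℓ, x ≠ 0 → HasDerivAt ρ0 (-g * ρ0 x / Q x) x)
    (hlimP : Filter.Tendsto ρ0 (nhdsWithin 0 (Ioi 0)) (nhds rhoP))
    (hlimM : Filter.Tendsto ρ0 (nhdsWithin 0 (Iio 0)) (nhds rhoM)) :
    (∃ ψ : ℝ → ℝ,
      ContinuousOn ψ (Icc (-m) ℓ) ∧ ψ (-m) = 0 ∧ ψ ℓ = 0 ∧ ψ 0 = 1 ∧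
      (∀ x ∈ Ioo (-m) ℓ, x ≠ 0 → DifferentiableAt ℝ ψ x) ∧
      IntervalIntegrable (fun x => (deriv ψ x) ^ 2) MeasureTheory.volume (-m) ℓ ∧
      (∫ x in (-m)..ℓ, g * ρ0 x * ψ x * deriv ψ x) < 0)
    ∧ ∀ ξ : ℝ, 0 < ξ →
      sInf {e : ℝ | ∃ φ ψ : ℝ → ℝ,
        ContinuousOn ψ (Icc (-m) ℓ) ∧ ψ (-m) = 0 ∧ ψ ℓ = 0 ∧
        (∀ x ∈ Ioo (-m) ℓ, x ≠ 0 → DifferentiableAt ℝ ψ x) ∧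
        IntervalIntegrable (fun x => (φ x) ^ 2) MeasureTheory.volume (-m) ℓ ∧
        IntervalIntegrable (fun x => (deriv ψ x) ^ 2) MeasureTheory.volume (-m) ℓ ∧
        (1 / 2) * (∫ x in (-m)..ℓ, ρ0 x * ((φ x) ^ 2 + (ψ x) ^ 2)) = 1 ∧
        e = (1 / 2) * ∫ x in (-m)..ℓ,
              (Q x * ρ0 x * (deriv ψ x + ξ * φ x) ^ 2
                - 2 * g * ρ0 x * ξ * ψ x * φ x)} < 0 := by
  have hρ : ∀ x ∈ Ioo (-m) ℓ, 0 ≤ ρ0 x ∧ ρ0 x ≤ C :=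
    fun x hx => ⟨hc.le.trans (hρbd x hx).1, (hρbd x hx).2⟩
  have hρm : AEStronglyMeasurable ρ0 (volume.restrict (Ι (-m) ℓ)) :=
    ContinuousOn.aestronglyMeasurable_uIoc (c := 0) (by linarith)
      fun x hx => (hode x hx.1 hx.2).continuousAt.continuousWithinAt
  obtain ⟨δ, hδ, hδm, hδℓ, hJ⟩ := exists_integral_mul_bump_mul_deriv_neg hm hℓ hg hq hjump hρm hρ
    (fun x hx => (hQbd x hx).1) hode hlimP hlimM
  have hψm : bump δ (-m) = 0 := bump_eq_zero hδ (by rwa [abs_neg, abs_of_pos hm])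
  have hψℓ : bump δ ℓ = 0 := bump_eq_zero hδ (by rwa [abs_of_pos hℓ])
  have hψd : ∀ x ∈ Ioo (-m) ℓ, x ≠ 0 → DifferentiableAt ℝ (bump δ) x :=
    fun x _ hx => (hasDerivAt_bump hx).differentiableAt
  refine ⟨⟨bump δ, (continuous_bump δ).continuousOn, hψm, hψℓ, bump_zero δ, hψd,
    intervalIntegrable_deriv_bump_sq hδ _ _, hJ⟩, fun ξ hξ => ?_⟩
  exact sInf_energySet_neg (by linarith) hg hξ hρm hρ (fun x hx => hq.le.trans (hQbd x hx).1)
    (continuous_bump δ).continuousOn hψm hψℓ hψd (intervalIntegrable_deriv_bump_sq hδ _ _) hJ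

/-- If the density jump `⟦ρ₀⟧ = ρ₀⁺ - ρ₀⁻ > 0` and `ρ₀/P'(ρ₀)` is bounded, then there is
`ψ ∈ H¹₀((-m,ℓ))` with `ψ(0) = 1` and `∫ g ρ₀ ψ ψ' < 0`; in particular, for every `|ξ| > 0`
the infimum of the energy `E` over the constraint set `𝒜` is negative. -/
theorem energy_infimum_negative
    (m ℓ g : ℝ) (hm : 0 < m) (hℓ : 0 < ℓ) (hg : 0 < g)
    (ρ0 Q : ℝ → ℝ) (rhoP rhoM : ℝ) (hjump : rhoM < rhoP)
    (c C q Q' : ℝ) (hc : 0 < c) (hq : 0 < q)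
    (hρbd : ∀ x ∈ Ioo (-m) ℓ, c ≤ ρ0 x ∧ ρ0 x ≤ C)
    (hQbd : ∀ x ∈ Ioo (-m) ℓ, q ≤ Q x ∧ Q x ≤ Q')
    (hcontM : ContinuousOn ρ0 (Ioo (-m) 0))
    (hcontP : ContinuousOn ρ0 (Ioo 0 ℓ))
    (hQcontM : ContinuousOn Q (Ioo (-m) 0))
    (hQcontP : ContinuousOn Q (Ioo 0 ℓ))
    (hode : ∀ x ∈ Ioo (-m) ℓ, x ≠ 0 → HasDerivAt ρ0 (-g * ρ0 x / Q x) x)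
    (hlimP : Filter.Tendsto ρ0 (nhdsWithin 0 (Ioi 0)) (nhds rhoP))
    (hlimM : Filter.Tendsto ρ0 (nhdsWithin 0 (Iio 0)) (nhds rhoM)) :
    (∃ ψ : ℝ → ℝ,
      ContinuousOn ψ (Icc (-m) ℓ) ∧ ψ (-m) = 0 ∧ ψ ℓ = 0 ∧ ψ 0 = 1 ∧
      (∀ x ∈ Ioo (-m) ℓ, x ≠ 0 → DifferentiableAt ℝ ψ x) ∧
      IntervalIntegrable (fun x => (deriv ψ x) ^ 2) MeasureTheory.volume (-m) ℓ ∧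
      (∫ x in (-m)..ℓ, g * ρ0 x * ψ x * deriv ψ x) < 0)
    ∧ ∀ ξ : ℝ, 0 < ξ →
      sInf {e : ℝ | ∃ φ ψ : ℝ → ℝ,
        ContinuousOn ψ (Icc (-m) ℓ) ∧ ψ (-m) = 0 ∧ ψ ℓ = 0 ∧
        (∀ x ∈ Ioo (-m) ℓ, x ≠ 0 → DifferentiableAt ℝ ψ x) ∧
        IntervalIntegrable (fun x => (φ x) ^ 2) MeasureTheory.volume (-m) ℓ ∧
        IntervalIntegrable (fun x => (deriv ψ x) ^ 2) MeasureTheory.volume (-m) ℓ ∧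
        (1 / 2) * (∫ x in (-m)..ℓ, ρ0 x * ((φ x) ^ 2 + (ψ x) ^ 2)) = 1 ∧
        e = (1 / 2) * ∫ x in (-m)..ℓ,
              (Q x * ρ0 x * (deriv ψ x + ξ * φ x) ^ 2
                - 2 * g * ρ0 x * ξ * ψ x * φ x)} < 0 :=
  energy_infimum_negative_general m ℓ g hm hℓ hg ρ0 Q rhoP rhoM hjump c C q Q' hc hq hρbd hQbd hode
    hlimP hlimM
end

section
/- For any real $(\varphi,\psi)\in L^2((-m,\ell))\times H^1_0((-m,\ell))$ and $|\xi|>0$, the energy admits the decomposition $E(\varphi,\psi)=-\frac{g}{2}\jump{\rho_0}\,\psi(0)^2+\frac12\int_{-m}^{\ell}\Big(\sqrt{P'(\rho_0)\rho_0}(\psi'+|\xi|\varphi)-\frac{g\sqrt{\rho_0}}{\sqrt{P'(\rho_0)}}\psi\Big)^2$. Consequently, if $E(\varphi,\psi)<0$ then $\psi(0)\neq 0$. -/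
/-! Completing the square pointwise gives
`Q ρ (ψ' + ξ φ)² - 2 g ρ ξ ψ φ = (√(Q ρ) (ψ' + ξ φ) - g √ρ / √Q ψ)² + g (ρ ψ²)'`,
where `(ρ ψ²)' = -g ρ / Q ψ² + 2 ρ ψ ψ'` by the steady-state equation `ρ' = -g ρ / Q`.
On each of `(-m, 0)` and `(0, ℓ)` the exact derivative integrates to the difference of the
one-sided limits of `ρ ψ²` at the endpoints. These vanish at `-m` and `ℓ`, where `ψ = 0` and `ρ`
stays bounded, and at the interface the two pieces leave `(ρ₀⁻ - ρ₀⁺) ψ(0)²`. Every term is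
integrable because the coefficients are bounded and `ψ' ∈ L²`. -/

open Set MeasureTheory Filter Topology intervalIntegral
open scoped ENNReal

noncomputable section Densities

variable (g ξ : ℝ) (ρ Q φ ψ : ℝ → ℝ)

def energyDensity (x : ℝ) : ℝ :=
  Q x * ρ x * (deriv ψ x + ξ * φ x) ^ 2 - 2 * g * ρ x * ξ * ψ x * φ x

def completedSquare (x : ℝ) : ℝ :=
  Real.sqrt (Q x * ρ x) * (deriv ψ x + ξ * φ x) - g * Real.sqrt (ρ x) / Real.sqrt (Q x) * ψ x

def weightedSqDeriv (x : ℝ) : ℝ :=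
  -g * ρ x / Q x * ψ x ^ 2 + 2 * ρ x * ψ x * deriv ψ x

variable {g ξ ρ Q φ ψ}

theorem energyDensity_eq {x : ℝ} (hQ : 0 < Q x) (hρ : 0 < ρ x) :
    energyDensity g ξ ρ Q φ ψ x
      = completedSquare g ξ ρ Q φ ψ x ^ 2 + g * weightedSqDeriv g ρ Q ψ x := by
  simp only [energyDensity, completedSquare, weightedSqDeriv, Real.sqrt_mul hQ.le]
  set u := Real.sqrt (Q x)
  set v := Real.sqrt (ρ x)
  have hu : u ≠ 0 := (Real.sqrt_pos.2 hQ).ne'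
  rw [← Real.sq_sqrt hQ.le, ← Real.sq_sqrt hρ.le]
  field_simp
  ring

theorem hasDerivAt_mul_sq {x : ℝ} (hρ : HasDerivAt ρ (-g * ρ x / Q x) x)
    (hψ : DifferentiableAt ℝ ψ x) :
    HasDerivAt (fun y => ρ y * ψ y ^ 2) (weightedSqDeriv g ρ Q ψ x) x :=
  (hρ.mul (hψ.hasDerivAt.fun_pow 2)).congr_deriv (by simp only [weightedSqDeriv]; ring)

end Densities

section Integrability

variable {μ : Measure ℝ} {s : Set ℝ} {f : ℝ → ℝ} {lo hi : ℝ}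

theorem memLp_restrict_of_continuousOn_of_mapsTo [IsFiniteMeasure (μ.restrict s)]
    (hs : MeasurableSet s) (hf : ContinuousOn f s) (hfs : MapsTo f s (Icc lo hi)) (p : ℝ≥0∞) :
    MemLp f p (μ.restrict s) :=
  memLp_of_bounded (ae_restrict_of_forall_mem hs hfs) (hf.aestronglyMeasurable hs) p

theorem memLp_top_sqrt_inv_of_mapsTo [IsFiniteMeasure (μ.restrict s)]
    (hs : MeasurableSet s) (hf : ContinuousOn f s) (hfs : MapsTo f s (Icc lo hi)) (hlo : 0 < lo) :
    MemLp f ∞ (μ.restrict s) ∧ MemLp (fun x => Real.sqrt (f x)) ∞ (μ.restrict s) ∧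
      MemLp (fun x => (f x)⁻¹) ∞ (μ.restrict s) ∧
      MemLp (fun x => (Real.sqrt (f x))⁻¹) ∞ (μ.restrict s) := by
  have hpos : ∀ x ∈ s, 0 < f x := fun x hx => hlo.trans_le (hfs hx).1
  have hsqrt : MapsTo (fun x => Real.sqrt (f x)) s (Icc (Real.sqrt lo) (Real.sqrt hi)) :=
    fun x hx => ⟨Real.sqrt_le_sqrt (hfs hx).1, Real.sqrt_le_sqrt (hfs hx).2⟩
  have hinv : ∀ {u : ℝ → ℝ} {a b : ℝ}, 0 < a → MapsTo u s (Icc a b) →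
      MapsTo (fun x => (u x)⁻¹) s (Icc b⁻¹ a⁻¹) := fun ha hu x hx =>
    ⟨inv_anti₀ (ha.trans_le (hu hx).1) (hu hx).2, inv_anti₀ ha (hu hx).1⟩
  have hsqrt_pos : 0 < Real.sqrt lo := Real.sqrt_pos.2 hlo
  refine ⟨memLp_restrict_of_continuousOn_of_mapsTo hs hf hfs ∞,
    memLp_restrict_of_continuousOn_of_mapsTo hs hf.sqrt hsqrt ∞,
    memLp_restrict_of_continuousOn_of_mapsTo hs (hf.inv₀ fun x hx => (hpos x hx).ne')
      (hinv hlo hfs) ∞,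
    memLp_restrict_of_continuousOn_of_mapsTo hs
      (hf.sqrt.inv₀ fun x hx => (Real.sqrt_pos.2 (hpos x hx)).ne') (hinv hsqrt_pos hsqrt) ∞⟩

theorem ContinuousOn.memLp_restrict_Ioo {a b : ℝ} (hf : ContinuousOn f (Icc a b)) (p : ℝ≥0∞) :
    MemLp f p (volume.restrict (Ioo a b)) := by
  obtain ⟨K, hK⟩ := isCompact_Icc.exists_bound_of_continuousOn hf
  exact memLp_restrict_of_continuousOn_of_mapsTo measurableSet_Ioo (hf.mono Ioo_subset_Icc_self)
    (fun x hx => abs_le.1 (hK x (Ioo_subset_Icc_self hx))) p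

end Integrability

theorem tendsto_mul_sq_zero_of_mapsTo {l : Filter ℝ} {s : Set ℝ} {ρ ψ : ℝ → ℝ} {c C : ℝ}
    (hs : s ∈ l) (hρ : MapsTo ρ s (Icc c C)) (hψ : Tendsto ψ l (𝓝 0)) :
    Tendsto (fun x => ρ x * ψ x ^ 2) l (𝓝 0) :=
  bdd_le_mul_tendsto_zero (mem_of_superset hs fun _ hx => (hρ hx).1)
    (mem_of_superset hs fun _ hx => (hρ hx).2) (by simpa using hψ.pow 2)

section Piece

variable {g ξ : ℝ} {ρ Q φ ψ : ℝ → ℝ} {a b c C q Q' : ℝ}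

theorem integrableOn_weightedSqDeriv (hc : 0 < c) (hq : 0 < q)
    (hρ : MapsTo ρ (Ioo a b) (Icc c C)) (hQ : MapsTo Q (Ioo a b) (Icc q Q'))
    (hρc : ContinuousOn ρ (Ioo a b)) (hQc : ContinuousOn Q (Ioo a b))
    (hψ : ContinuousOn ψ (Icc a b)) (hψ' : MemLp (deriv ψ) 2 (volume.restrict (Ioo a b))) :
    IntegrableOn (weightedSqDeriv g ρ Q ψ) (Ioo a b) := by
  obtain ⟨hρ_top, -⟩ := memLp_top_sqrt_inv_of_mapsTo (μ := volume) measurableSet_Ioo hρc hρ hc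
  obtain ⟨-, -, hQ_inv, -⟩ :=
    memLp_top_sqrt_inv_of_mapsTo (μ := volume) measurableSet_Ioo hQc hQ hq
  have hψ_top := hψ.memLp_restrict_Ioo ∞
  have hB : MemLp (fun x => -g * ρ x * (Q x)⁻¹ * ψ x * ψ x) ∞ (volume.restrict (Ioo a b)) :=
    hψ_top.mul' (hψ_top.mul' (hQ_inv.mul' (hρ_top.const_mul (-g)) (r := ∞)) (r := ∞))
  have hA : MemLp (fun x => 2 * ρ x * ψ x) ∞ (volume.restrict (Ioo a b)) :=
    hψ_top.mul' (hρ_top.const_mul 2)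
  have hsplit : weightedSqDeriv g ρ Q ψ
      = fun x => -g * ρ x * (Q x)⁻¹ * ψ x * ψ x + 2 * ρ x * ψ x * deriv ψ x := by
    funext x
    simp only [weightedSqDeriv]
    ring
  rw [hsplit]
  exact (hB.integrable le_top).add ((hψ'.mul' hA).integrable one_le_two)

theorem integrableOn_completedSquare_sq (hc : 0 < c) (hq : 0 < q)
    (hρ : MapsTo ρ (Ioo a b) (Icc c C)) (hQ : MapsTo Q (Ioo a b) (Icc q Q'))
    (hρc : ContinuousOn ρ (Ioo a b)) (hQc : ContinuousOn Q (Ioo a b))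
    (hφ : ContinuousOn φ (Icc a b)) (hψ : ContinuousOn ψ (Icc a b))
    (hψ' : MemLp (deriv ψ) 2 (volume.restrict (Ioo a b))) :
    IntegrableOn (fun x => completedSquare g ξ ρ Q φ ψ x ^ 2) (Ioo a b) := by
  have hQρ : MapsTo (fun x => Q x * ρ x) (Ioo a b) (Icc (q * c) (Q' * C)) := fun x hx =>
    ⟨mul_le_mul (hQ hx).1 (hρ hx).1 hc.le (hq.trans_le (hQ hx).1).le,
      mul_le_mul (hQ hx).2 (hρ hx).2 (hc.trans_le (hρ hx).1).le
        ((hq.trans_le (hQ hx).1).trans_le (hQ hx).2).le⟩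
  obtain ⟨-, hQρ_sqrt, -⟩ :=
    memLp_top_sqrt_inv_of_mapsTo (μ := volume) measurableSet_Ioo (hQc.mul hρc) hQρ
      (mul_pos hq hc)
  obtain ⟨-, hρ_sqrt, -⟩ := memLp_top_sqrt_inv_of_mapsTo (μ := volume) measurableSet_Ioo hρc hρ hc
  obtain ⟨-, -, -, hQ_sqrt_inv⟩ :=
    memLp_top_sqrt_inv_of_mapsTo (μ := volume) measurableSet_Ioo hQc hQ hq
  have hS : MemLp (fun x => Real.sqrt (Q x * ρ x) * (deriv ψ x + ξ * φ x)
      - g * Real.sqrt (ρ x) * (Real.sqrt (Q x))⁻¹ * ψ x) 2 (volume.restrict (Ioo a b)) :=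
    ((hψ'.add ((hφ.memLp_restrict_Ioo 2).const_mul ξ)).mul' hQρ_sqrt).sub
      ((hψ.memLp_restrict_Ioo 2).mul' (hQ_sqrt_inv.mul' (hρ_sqrt.const_mul g) (r := ∞)))
  simpa only [IntegrableOn, completedSquare, div_eq_mul_inv] using hS.integrable_sq

theorem integral_energyDensity_eq (hab : a < b) (hc : 0 < c) (hq : 0 < q)
    (hρ : MapsTo ρ (Ioo a b) (Icc c C)) (hQ : MapsTo Q (Ioo a b) (Icc q Q'))
    (hQc : ContinuousOn Q (Ioo a b)) (hode : ∀ x ∈ Ioo a b, HasDerivAt ρ (-g * ρ x / Q x) x)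
    (hφ : ContinuousOn φ (Icc a b)) (hψ : ContinuousOn ψ (Icc a b))
    (hψd : ∀ x ∈ Ioo a b, DifferentiableAt ℝ ψ x)
    (hψ' : IntervalIntegrable (fun x => deriv ψ x ^ 2) volume a b) {fa fb : ℝ}
    (ha : Tendsto (fun x => ρ x * ψ x ^ 2) (𝓝[>] a) (𝓝 fa))
    (hb : Tendsto (fun x => ρ x * ψ x ^ 2) (𝓝[<] b) (𝓝 fb)) :
    IntervalIntegrable (energyDensity g ξ ρ Q φ ψ) volume a b ∧
      IntervalIntegrable (fun x => completedSquare g ξ ρ Q φ ψ x ^ 2) volume a b ∧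
      ∫ x in a..b, energyDensity g ξ ρ Q φ ψ x
        = (∫ x in a..b, completedSquare g ξ ρ Q φ ψ x ^ 2) + g * (fb - fa) := by
  have hρc : ContinuousOn ρ (Ioo a b) := fun x hx => (hode x hx).continuousAt.continuousWithinAt
  have hψ'2 : MemLp (deriv ψ) 2 (volume.restrict (Ioo a b)) :=
    (memLp_two_iff_integrable_sq (measurable_deriv ψ).aestronglyMeasurable).2
      ((intervalIntegrable_iff_integrableOn_Ioo_of_le hab.le).1 hψ')
  have hF : IntervalIntegrable (weightedSqDeriv g ρ Q ψ) volume a b :=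
    (intervalIntegrable_iff_integrableOn_Ioo_of_le hab.le).2
      (integrableOn_weightedSqDeriv hc hq hρ hQ hρc hQc hψ hψ'2)
  have hS : IntervalIntegrable (fun x => completedSquare g ξ ρ Q φ ψ x ^ 2) volume a b :=
    (intervalIntegrable_iff_integrableOn_Ioo_of_le hab.le).2
      (integrableOn_completedSquare_sq hc hq hρ hQ hρc hQc hφ hψ hψ'2)
  have hE : EqOn (energyDensity g ξ ρ Q φ ψ)
      (fun x => completedSquare g ξ ρ Q φ ψ x ^ 2 + g * weightedSqDeriv g ρ Q ψ x) (Ioo a b) :=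
    fun x hx => energyDensity_eq (hq.trans_le (hQ hx).1) (hc.trans_le (hρ hx).1)
  have hFTC : ∫ x in a..b, weightedSqDeriv g ρ Q ψ x = fb - fa :=
    integral_eq_sub_of_hasDerivAt_of_tendsto hab
      (fun x hx => hasDerivAt_mul_sq (hode x hx) (hψd x hx)) hF ha hb
  refine ⟨(hS.add (hF.const_mul g)).congr_uIoo ?_, hS, ?_⟩
  · rw [uIoo_of_le hab.le]
    exact hE.symm
  · rw [integral_congr_Ioo_of_le hab.le hE, integral_add hS (hF.const_mul g),
      intervalIntegral.integral_const_mul, hFTC]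

end Piece

theorem energy_decomposition_general
    (m ℓ g ξ : ℝ) (hm : 0 < m) (hℓ : 0 < ℓ)
    (ρ0 Q : ℝ → ℝ) (rhoP rhoM : ℝ)
    (c C q Q' : ℝ) (hc : 0 < c) (hq : 0 < q)
    (hρbd : ∀ x ∈ Ioo (-m) ℓ, c ≤ ρ0 x ∧ ρ0 x ≤ C)
    (hQbd : ∀ x ∈ Ioo (-m) ℓ, q ≤ Q x ∧ Q x ≤ Q')
    (hQcontM : ContinuousOn Q (Ioo (-m) 0))
    (hQcontP : ContinuousOn Q (Ioo 0 ℓ))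
    (hode : ∀ x ∈ Ioo (-m) ℓ, x ≠ 0 → HasDerivAt ρ0 (-g * ρ0 x / Q x) x)
    (hlimP : Filter.Tendsto ρ0 (nhdsWithin 0 (Ioi 0)) (nhds rhoP))
    (hlimM : Filter.Tendsto ρ0 (nhdsWithin 0 (Iio 0)) (nhds rhoM))
    (φ ψ : ℝ → ℝ)
    (hφ : ContinuousOn φ (Icc (-m) ℓ))
    (hψcont : ContinuousOn ψ (Icc (-m) ℓ)) (hψa : ψ (-m) = 0) (hψb : ψ ℓ = 0)
    (hψdiff : ∀ x ∈ Ioo (-m) ℓ, x ≠ 0 → DifferentiableAt ℝ ψ x)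
    (hψ' : IntervalIntegrable (fun x => (deriv ψ x) ^ 2) MeasureTheory.volume (-m) ℓ) :
    ((1 / 2) * ∫ x in (-m)..ℓ,
        (Q x * ρ0 x * (deriv ψ x + ξ * φ x) ^ 2 - 2 * g * ρ0 x * ξ * ψ x * φ x))
      = -(g / 2) * (rhoP - rhoM) * (ψ 0) ^ 2
        + (1 / 2) * ∫ x in (-m)..ℓ,
            (Real.sqrt (Q x * ρ0 x) * (deriv ψ x + ξ * φ x)
              - g * Real.sqrt (ρ0 x) / Real.sqrt (Q x) * ψ x) ^ 2
    ∧ (((1 / 2) * ∫ x in (-m)..ℓ,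
        (Q x * ρ0 x * (deriv ψ x + ξ * φ x) ^ 2 - 2 * g * ρ0 x * ξ * ψ x * φ x)) < 0
        → ψ 0 ≠ 0) := by
  have hm0 : -m < 0 := neg_neg_of_pos hm
  have hmℓ : -m < ℓ := hm0.trans hℓ
  have h0 : (0 : ℝ) ∈ Icc (-m) ℓ := ⟨hm0.le, hℓ.le⟩
  have hIooM : Ioo (-m) 0 ⊆ Ioo (-m) ℓ := Ioo_subset_Ioo_right hℓ.le
  have hIooP : Ioo 0 ℓ ⊆ Ioo (-m) ℓ := Ioo_subset_Ioo_left hm0.le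
  have hIccM : Icc (-m) 0 ⊆ Icc (-m) ℓ := Icc_subset_Icc_right hℓ.le
  have hIccP : Icc 0 ℓ ⊆ Icc (-m) ℓ := Icc_subset_Icc_left hm0.le
  have hψlim : ∀ {x : ℝ} {t : Set ℝ}, x ∈ Icc (-m) ℓ → Icc (-m) ℓ ∈ 𝓝[t] x →
      Tendsto ψ (𝓝[t] x) (𝓝 (ψ x)) := fun hx ht =>
    (hψcont.continuousWithinAt hx).mono_of_mem_nhdsWithin ht
  have hlim_left : Tendsto (fun x => ρ0 x * ψ x ^ 2) (𝓝[>] (-m)) (𝓝 0) :=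
    tendsto_mul_sq_zero_of_mapsTo (Ioo_mem_nhdsGT hmℓ) hρbd
      (hψa ▸ hψlim (left_mem_Icc.2 hmℓ.le) (Icc_mem_nhdsGT hmℓ))
  have hlim_right : Tendsto (fun x => ρ0 x * ψ x ^ 2) (𝓝[<] ℓ) (𝓝 0) :=
    tendsto_mul_sq_zero_of_mapsTo (Ioo_mem_nhdsLT hmℓ) hρbd
      (hψb ▸ hψlim (right_mem_Icc.2 hmℓ.le) (Icc_mem_nhdsLT hmℓ))
  have hlim_zeroM : Tendsto (fun x => ρ0 x * ψ x ^ 2) (𝓝[<] 0) (𝓝 (rhoM * ψ 0 ^ 2)) :=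
    hlimM.mul ((hψlim h0 (Icc_mem_nhdsLT_of_mem ⟨hm0, hℓ.le⟩)).pow 2)
  have hlim_zeroP : Tendsto (fun x => ρ0 x * ψ x ^ 2) (𝓝[>] 0) (𝓝 (rhoP * ψ 0 ^ 2)) :=
    hlimP.mul ((hψlim h0 (Icc_mem_nhdsGT_of_mem ⟨hm0.le, hℓ⟩)).pow 2)
  obtain ⟨hEM, hSM, hM⟩ := integral_energyDensity_eq (ξ := ξ) (φ := φ) hm0 hc hq
    (MapsTo.mono_left hρbd hIooM) (MapsTo.mono_left hQbd hIooM) hQcontM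
    (fun x hx => hode x (hIooM hx) hx.2.ne) (hφ.mono hIccM) (hψcont.mono hIccM)
    (fun x hx => hψdiff x (hIooM hx) hx.2.ne)
    (hψ'.mono_set (uIcc_subset_uIcc_left (Icc_subset_uIcc h0))) hlim_left hlim_zeroM
  obtain ⟨hEP, hSP, hP⟩ := integral_energyDensity_eq (ξ := ξ) (φ := φ) hℓ hc hq
    (MapsTo.mono_left hρbd hIooP) (MapsTo.mono_left hQbd hIooP) hQcontP
    (fun x hx => hode x (hIooP hx) hx.1.ne') (hφ.mono hIccP) (hψcont.mono hIccP)
    (fun x hx => hψdiff x (hIooP hx) hx.1.ne')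
    (hψ'.mono_set (uIcc_subset_uIcc_right (Icc_subset_uIcc h0))) hlim_zeroP hlim_right
  have hE : (1 / 2) * ∫ x in (-m)..ℓ, energyDensity g ξ ρ0 Q φ ψ x
      = -(g / 2) * (rhoP - rhoM) * ψ 0 ^ 2
        + (1 / 2) * ∫ x in (-m)..ℓ, completedSquare g ξ ρ0 Q φ ψ x ^ 2 := by
    rw [← integral_add_adjacent_intervals hEM hEP, ← integral_add_adjacent_intervals hSM hSP,
      hM, hP]
    ring
  refine ⟨hE, fun hneg hψ0 => ?_⟩
  have hS : 0 ≤ ∫ x in (-m)..ℓ, completedSquare g ξ ρ0 Q φ ψ x ^ 2 :=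
    integral_nonneg hmℓ.le fun x _ => sq_nonneg _
  change (1 / 2) * ∫ x in (-m)..ℓ, energyDensity g ξ ρ0 Q φ ψ x < 0 at hneg
  rw [hE, hψ0] at hneg
  linarith

/-- Energy decomposition: for real `(φ,ψ) ∈ L² × H¹₀((-m,ℓ))` and `|ξ| > 0`,
`E(φ,ψ) = -(g/2)⟦ρ₀⟧ψ(0)² + ½∫ (√(P'(ρ₀)ρ₀)(ψ'+|ξ|φ) - g√ρ₀/√(P'(ρ₀)) ψ)²`.
Consequently `E(φ,ψ) < 0` implies `ψ(0) ≠ 0`. Here `Q x = P'(ρ₀(x))`. -/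
theorem energy_decomposition
    (m ℓ g ξ : ℝ) (hm : 0 < m) (hℓ : 0 < ℓ) (hg : 0 < g) (hξ : 0 < ξ)
    (ρ0 Q : ℝ → ℝ) (rhoP rhoM : ℝ)
    (c C q Q' : ℝ) (hc : 0 < c) (hq : 0 < q)
    (hρbd : ∀ x ∈ Ioo (-m) ℓ, c ≤ ρ0 x ∧ ρ0 x ≤ C)
    (hQbd : ∀ x ∈ Ioo (-m) ℓ, q ≤ Q x ∧ Q x ≤ Q')
    (hcontM : ContinuousOn ρ0 (Ioo (-m) 0))
    (hcontP : ContinuousOn ρ0 (Ioo 0 ℓ))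
    (hQcontM : ContinuousOn Q (Ioo (-m) 0))
    (hQcontP : ContinuousOn Q (Ioo 0 ℓ))
    (hode : ∀ x ∈ Ioo (-m) ℓ, x ≠ 0 → HasDerivAt ρ0 (-g * ρ0 x / Q x) x)
    (hlimP : Filter.Tendsto ρ0 (nhdsWithin 0 (Ioi 0)) (nhds rhoP))
    (hlimM : Filter.Tendsto ρ0 (nhdsWithin 0 (Iio 0)) (nhds rhoM))
    (φ ψ : ℝ → ℝ)
    (hφ : ContinuousOn φ (Icc (-m) ℓ))
    (hψcont : ContinuousOn ψ (Icc (-m) ℓ)) (hψa : ψ (-m) = 0) (hψb : ψ ℓ = 0)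
    (hψdiff : ∀ x ∈ Ioo (-m) ℓ, x ≠ 0 → DifferentiableAt ℝ ψ x)
    (hψ' : IntervalIntegrable (fun x => (deriv ψ x) ^ 2) MeasureTheory.volume (-m) ℓ) :
    ((1 / 2) * ∫ x in (-m)..ℓ,
        (Q x * ρ0 x * (deriv ψ x + ξ * φ x) ^ 2 - 2 * g * ρ0 x * ξ * ψ x * φ x))
      = -(g / 2) * (rhoP - rhoM) * (ψ 0) ^ 2
        + (1 / 2) * ∫ x in (-m)..ℓ,
            (Real.sqrt (Q x * ρ0 x) * (deriv ψ x + ξ * φ x)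
              - g * Real.sqrt (ρ0 x) / Real.sqrt (Q x) * ψ x) ^ 2
    ∧ (((1 / 2) * ∫ x in (-m)..ℓ,
        (Q x * ρ0 x * (deriv ψ x + ξ * φ x) ^ 2 - 2 * g * ρ0 x * ξ * ψ x * φ x)) < 0
        → ψ 0 ≠ 0) :=
  energy_decomposition_general m ℓ g ξ hm hℓ ρ0 Q rhoP rhoM c C q Q' hc hq hρbd hQbd hQcontM hQcontP
    hode hlimP hlimM φ ψ hφ hψcont hψa hψb hψdiff hψ'
end

section
/- Suppose $(\varphi,\psi)$ solves the first-order system $\omega=\mu|\xi|^{-1}\rho_0\varphi+g\rho_0\psi$, $\omega'=-\mu\rho_0\psi-g|\xi|\rho_0\varphi$, where $\omega=P'(\rho_0)\rho_0(\psi'+|\xi|\varphi)$, with $-g|\xi|\le\mu\le-\frac{C_1}{2}|\xi|<0$, $\rho_0$ smooth on $(0,\ell)$ and bounded above and below, and $\|\varphi\|_{L^2(0,\ell)}+\|\psi\|_{L^2(0,\ell)}\le A_0$. Then for every $k\ge 0$ there is $A_k>0$ independent of $|\xi|$ such that $\|\varphi\|_{H^k(0,\ell)}+\|\psi\|_{H^k(0,\ell)}\le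 A_k\sum_{j=0}^{k}|\xi|^j$. -/
open Set

/-- The (piecewise) Sobolev `H^k(0,ℓ)` norm, as the sum of the `L²` norms of the iterated
derivatives up to order `k`. -/
noncomputable def HkNorm (ℓ : ℝ) (k : ℕ) (f : ℝ → ℝ) : ℝ :=
  ∑ j ∈ Finset.range (k + 1),
    Real.sqrt (∫ x in (0 : ℝ)..ℓ, (iteratedDerivWithin j f (Icc 0 ℓ) x) ^ 2)

/-- Elementary power estimate used to absorb `ξ ^ (k - i)` into `ξ ^ k`. -/
lemma pow_tsub_le_aux {R1 ξ : ℝ} (hR1 : 0 < R1) (hξ : R1 ≤ ξ) {i k : ℕ} (hik : i ≤ k) :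
    ξ ^ (k - i) ≤ ξ ^ k * (max 1 R1⁻¹) ^ k := by
  have hξ0 : 0 < ξ := lt_of_lt_of_le hR1 hξ
  rcases le_or_gt 1 ξ with h1 | h1
  · have h2 : ξ ^ (k - i) ≤ ξ ^ k := pow_le_pow_right₀ h1 (Nat.sub_le k i)
    have h3 : (1 : ℝ) ≤ (max 1 R1⁻¹) ^ k := one_le_pow₀ (le_max_left 1 R1⁻¹)
    calc ξ ^ (k - i) ≤ ξ ^ k := h2
      _ = ξ ^ k * 1 := (mul_one _).symm
      _ ≤ ξ ^ k * (max 1 R1⁻¹) ^ k := by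
          exact mul_le_mul_of_nonneg_left h3 (pow_nonneg hξ0.le k)
  · have h2 : ξ ^ (k - i) ≤ 1 := pow_le_one₀ hξ0.le h1.le
    have h4 : (1 : ℝ) ≤ ξ * max 1 R1⁻¹ := by
      have hR1' : (0 : ℝ) < R1⁻¹ := inv_pos.mpr hR1
      have : R1 * R1⁻¹ ≤ ξ * R1⁻¹ := mul_le_mul_of_nonneg_right hξ hR1'.le
      have h5 : (1 : ℝ) ≤ ξ * R1⁻¹ := by
        rwa [mul_inv_cancel₀ hR1.ne'] at this
      calc (1 : ℝ) ≤ ξ * R1⁻¹ := h5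
        _ ≤ ξ * max 1 R1⁻¹ := mul_le_mul_of_nonneg_left (le_max_right _ _) hξ0.le
    have h5 : (1 : ℝ) ≤ (ξ * max 1 R1⁻¹) ^ k := one_le_pow₀ h4
    rw [mul_pow] at h5
    exact h2.trans h5

/-- Bounds on iterated derivatives of coefficient functions of the shape `x ↦ e + d * H x`. -/
lemma coeff_bound {ℓ : ℝ} (hℓ : 0 < ℓ) {H : ℝ → ℝ}
    (hH : ContDiffOn ℝ (⊤ : ℕ∞) H (Icc 0 ℓ)) {D : ℕ → ℝ}
    (hD : ∀ j : ℕ, ∀ x ∈ Icc (0 : ℝ) ℓ, |iteratedDerivWithin j H (Icc 0 ℓ) x| ≤ D j)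
    {e d B R1 ξ : ℝ} (hR1 : 0 < R1) (hξ : R1 ≤ ξ) (he : |e| ≤ ξ) (hd : |d| ≤ B) :
    ∀ j : ℕ, ∀ x ∈ Icc (0 : ℝ) ℓ,
      |iteratedDerivWithin j (fun y => e + d * H y) (Icc 0 ℓ) x| ≤
        (1 + (1 + B) * (1 + D j)) * (1 + R1⁻¹) * ξ := by
  have hu : UniqueDiffOn ℝ (Icc (0 : ℝ) ℓ) := uniqueDiffOn_Icc hℓ
  have hξ0 : 0 < ξ := lt_of_lt_of_le hR1 hξ
  have hR1ξ : (1 : ℝ) ≤ R1⁻¹ * ξ := by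
    rw [← inv_mul_cancel₀ hR1.ne']
    exact mul_le_mul_of_nonneg_left hξ (inv_pos.mpr hR1).le
  intro j x hx
  have hD0 : 0 ≤ D j := le_trans (abs_nonneg _) (hD j x hx)
  have hB0 : 0 ≤ B := le_trans (abs_nonneg _) hd
  have hdH : |d * iteratedDerivWithin j H (Icc 0 ℓ) x| ≤ B * D j := by
    rw [abs_mul]
    exact mul_le_mul hd (hD j x hx) (abs_nonneg _) hB0
  match j with
  | 0 =>
    simp only [iteratedDerivWithin_zero]
    have h1 : |e + d * H x| ≤ ξ + B * D 0 := by
      have := hD 0 x hx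
      simp only [iteratedDerivWithin_zero] at hdH this
      calc |e + d * H x| ≤ |e| + |d * H x| := abs_add_le _ _
        _ ≤ ξ + B * D 0 := add_le_add he hdH
    refine h1.trans ?_
    nlinarith [mul_nonneg hB0 hD0, mul_nonneg (mul_nonneg hB0 hD0) hξ0.le,
      mul_nonneg hD0 hξ0.le, mul_nonneg hB0 hξ0.le, inv_pos.mpr hR1]
  | (j + 1) =>
    have hc : ContDiffOn ℝ ((j + 1 : ℕ) : WithTop ℕ∞) H (Icc 0 ℓ) :=
      hH.of_le (by exact_mod_cast le_top)
    rw [iteratedDerivWithin_const_add (Nat.succ_pos j),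
      iteratedDerivWithin_const_mul hx hu d (hc x hx)]
    refine hdH.trans ?_
    nlinarith [mul_nonneg hB0 hD0, mul_nonneg (mul_nonneg hB0 hD0) hξ0.le,
      mul_nonneg hD0 hξ0.le, mul_nonneg hB0 hξ0.le, inv_pos.mpr hR1,
      mul_nonneg (mul_nonneg hB0 hD0) (mul_nonneg (inv_pos.mpr hR1).le hξ0.le)]

/-- Pointwise bounds for all iterated derivatives of solutions of a linear first order
`2×2` ODE system whose coefficients have all derivatives `O(ξ)`. -/
lemma ode_pointwise_bound (ℓ R1 : ℝ) (hℓ : 0 < ℓ) (hR1 : 0 < R1) (K : ℕ → ℝ)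
    (hK : ∀ j, 0 ≤ K j) :
    ∀ k : ℕ, ∃ M : ℝ, 0 < M ∧ ∀ (ξ : ℝ) (a₁ a₂ b₁ b₂ u v : ℝ → ℝ),
      R1 ≤ ξ →
      ContDiffOn ℝ (⊤ : ℕ∞) a₁ (Icc 0 ℓ) → ContDiffOn ℝ (⊤ : ℕ∞) a₂ (Icc 0 ℓ) →
      ContDiffOn ℝ (⊤ : ℕ∞) b₁ (Icc 0 ℓ) → ContDiffOn ℝ (⊤ : ℕ∞) b₂ (Icc 0 ℓ) →
      ContDiffOn ℝ (⊤ : ℕ∞) u (Icc 0 ℓ) → ContDiffOn ℝ (⊤ : ℕ∞) v (Icc 0 ℓ) →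
      (∀ j : ℕ, ∀ x ∈ Icc (0 : ℝ) ℓ, |iteratedDerivWithin j a₁ (Icc 0 ℓ) x| ≤ K j * ξ) →
      (∀ j : ℕ, ∀ x ∈ Icc (0 : ℝ) ℓ, |iteratedDerivWithin j a₂ (Icc 0 ℓ) x| ≤ K j * ξ) →
      (∀ j : ℕ, ∀ x ∈ Icc (0 : ℝ) ℓ, |iteratedDerivWithin j b₁ (Icc 0 ℓ) x| ≤ K j * ξ) →
      (∀ j : ℕ, ∀ x ∈ Icc (0 : ℝ) ℓ, |iteratedDerivWithin j b₂ (Icc 0 ℓ) x| ≤ K j * ξ) →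
      (∀ x ∈ Icc (0 : ℝ) ℓ, derivWithin u (Icc 0 ℓ) x = a₁ x * u x + a₂ x * v x) →
      (∀ x ∈ Icc (0 : ℝ) ℓ, derivWithin v (Icc 0 ℓ) x = b₁ x * u x + b₂ x * v x) →
      ∀ j ≤ k, ∀ x ∈ Icc (0 : ℝ) ℓ,
        |iteratedDerivWithin j u (Icc 0 ℓ) x| + |iteratedDerivWithin j v (Icc 0 ℓ) x| ≤
          M * ξ ^ j * (|u x| + |v x|) := by
  have hu : UniqueDiffOn ℝ (Icc (0 : ℝ) ℓ) := uniqueDiffOn_Icc hℓ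
  intro k
  induction k with
  | zero =>
    refine ⟨1, one_pos, ?_⟩
    intro ξ a₁ a₂ b₁ b₂ u v hξ _ _ _ _ _ _ _ _ _ _ _ _ j hj x hx
    interval_cases j
    simp [iteratedDerivWithin_zero]
  | succ k IH =>
    obtain ⟨M, hM, hbd⟩ := IH
    set r : ℝ := max 1 R1⁻¹ with hr
    have hr1 : (1 : ℝ) ≤ r := le_max_left _ _
    have hr0 : (0 : ℝ) ≤ r := le_trans zero_le_one hr1
    set S : ℝ := ∑ i ∈ Finset.range (k + 1), (k.choose i : ℝ) * K i with hS
    have hS0 : 0 ≤ S := Finset.sum_nonneg fun i _ =>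
      mul_nonneg (Nat.cast_nonneg _) (hK i)
    refine ⟨M + 4 * (S * M * r ^ k) + 1, by positivity, ?_⟩
    intro ξ a₁ a₂ b₁ b₂ u v hξ ha₁ ha₂ hb₁ hb₂ hcu hcv hKa₁ hKa₂ hKb₁ hKb₂ hequ heqv j hj x hx
    have hξ0 : 0 < ξ := lt_of_lt_of_le hR1 hξ
    have hT0 : 0 ≤ |u x| + |v x| := add_nonneg (abs_nonneg _) (abs_nonneg _)
    have hextra : 0 ≤ 4 * (S * M * r ^ k) + 1 := by positivity
    rcases Nat.lt_succ_iff_lt_or_eq.mp (Nat.lt_succ_of_le hj) with hj' | rfl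
    · -- case j ≤ k : use the inductive bound, with a bigger constant
      have h := hbd ξ a₁ a₂ b₁ b₂ u v hξ ha₁ ha₂ hb₁ hb₂ hcu hcv hKa₁ hKa₂ hKb₁ hKb₂
        hequ heqv j (Nat.lt_succ_iff.mp hj') x hx
      refine h.trans ?_
      have : M * ξ ^ j ≤ (M + 4 * (S * M * r ^ k) + 1) * ξ ^ j := by
        apply mul_le_mul_of_nonneg_right _ (pow_nonneg hξ0.le j)
        linarith
      exact mul_le_mul_of_nonneg_right this hT0
    · -- case j = k + 1
      -- key product estimate
      have hmain : ∀ (a f : ℝ → ℝ), ContDiffOn ℝ (⊤ : ℕ∞) a (Icc 0 ℓ) →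
          ContDiffOn ℝ (⊤ : ℕ∞) f (Icc 0 ℓ) →
          (∀ j : ℕ, ∀ y ∈ Icc (0 : ℝ) ℓ, |iteratedDerivWithin j a (Icc 0 ℓ) y| ≤ K j * ξ) →
          (∀ j ≤ k,
            |iteratedDerivWithin j f (Icc 0 ℓ) x| ≤ M * ξ ^ j * (|u x| + |v x|)) →
          |iteratedDerivWithin k (fun y => a y * f y) (Icc 0 ℓ) x| ≤
            S * M * r ^ k * ξ ^ (k + 1) * (|u x| + |v x|) := by
        intro a f ha hf hKa hMf
        have h1 : |iteratedDerivWithin k (fun y => a y * f y) (Icc 0 ℓ) x| ≤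
            ∑ i ∈ Finset.range (k + 1), (k.choose i : ℝ) *
              |iteratedDerivWithin i a (Icc 0 ℓ) x| *
              |iteratedDerivWithin (k - i) f (Icc 0 ℓ) x| := by
          rw [← Real.norm_eq_abs, ← norm_iteratedFDerivWithin_eq_norm_iteratedDerivWithin]
          refine (norm_iteratedFDerivWithin_mul_le ha hf hu hx
            (by exact_mod_cast le_top : (k : WithTop ℕ∞) ≤ ((⊤ : ℕ∞) : WithTop ℕ∞))).trans ?_
          apply le_of_eq
          refine Finset.sum_congr rfl fun i _ => ?_
          rw [norm_iteratedFDerivWithin_eq_norm_iteratedDerivWithin,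
            norm_iteratedFDerivWithin_eq_norm_iteratedDerivWithin,
            Real.norm_eq_abs, Real.norm_eq_abs]
        refine h1.trans ?_
        have h2 : ∀ i ∈ Finset.range (k + 1),
            (k.choose i : ℝ) * |iteratedDerivWithin i a (Icc 0 ℓ) x| *
              |iteratedDerivWithin (k - i) f (Icc 0 ℓ) x| ≤
            ((k.choose i : ℝ) * K i) * (M * r ^ k * ξ ^ (k + 1) * (|u x| + |v x|)) := by
          intro i hi
          have hik : i ≤ k := Nat.lt_succ_iff.mp (Finset.mem_range.mp hi)
          have hA := hKa i x hx
          have hF := hMf (k - i) (Nat.sub_le k i)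
          have hKiξ : 0 ≤ K i * ξ := mul_nonneg (hK i) hξ0.le
          have hprod : |iteratedDerivWithin i a (Icc 0 ℓ) x| *
              |iteratedDerivWithin (k - i) f (Icc 0 ℓ) x| ≤
              (K i * ξ) * (M * ξ ^ (k - i) * (|u x| + |v x|)) :=
            mul_le_mul hA hF (abs_nonneg _) hKiξ
          have hpow : ξ ^ (k - i) ≤ ξ ^ k * r ^ k := pow_tsub_le_aux hR1 hξ hik
          have hstep : (K i * ξ) * (M * ξ ^ (k - i) * (|u x| + |v x|)) ≤
              K i * (M * r ^ k * ξ ^ (k + 1) * (|u x| + |v x|)) := by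
            have hc0 : 0 ≤ K i * (M * (|u x| + |v x|) * ξ) :=
              mul_nonneg (hK i) (mul_nonneg (mul_nonneg hM.le hT0) hξ0.le)
            calc (K i * ξ) * (M * ξ ^ (k - i) * (|u x| + |v x|))
                = K i * (M * (|u x| + |v x|) * ξ) * ξ ^ (k - i) := by ring
              _ ≤ K i * (M * (|u x| + |v x|) * ξ) * (ξ ^ k * r ^ k) :=
                  mul_le_mul_of_nonneg_left hpow hc0
              _ = K i * (M * r ^ k * ξ ^ (k + 1) * (|u x| + |v x|)) := by ring
          calc (k.choose i : ℝ) * |iteratedDerivWithin i a (Icc 0 ℓ) x| *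
                |iteratedDerivWithin (k - i) f (Icc 0 ℓ) x|
              = (k.choose i : ℝ) * (|iteratedDerivWithin i a (Icc 0 ℓ) x| *
                |iteratedDerivWithin (k - i) f (Icc 0 ℓ) x|) := by ring
            _ ≤ (k.choose i : ℝ) * ((K i * ξ) * (M * ξ ^ (k - i) * (|u x| + |v x|))) :=
                mul_le_mul_of_nonneg_left hprod (Nat.cast_nonneg _)
            _ ≤ (k.choose i : ℝ) * (K i * (M * r ^ k * ξ ^ (k + 1) * (|u x| + |v x|))) :=
                mul_le_mul_of_nonneg_left hstep (Nat.cast_nonneg _)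
            _ = ((k.choose i : ℝ) * K i) * (M * r ^ k * ξ ^ (k + 1) * (|u x| + |v x|)) := by
                ring
        refine (Finset.sum_le_sum h2).trans ?_
        rw [← Finset.sum_mul, ← hS]
        apply le_of_eq
        ring
      -- the inductive bounds for u and v separately at the point x
      have hcomb : ∀ j ≤ k,
          |iteratedDerivWithin j u (Icc 0 ℓ) x| + |iteratedDerivWithin j v (Icc 0 ℓ) x| ≤
            M * ξ ^ j * (|u x| + |v x|) := fun j hjk =>
        hbd ξ a₁ a₂ b₁ b₂ u v hξ ha₁ ha₂ hb₁ hb₂ hcu hcv hKa₁ hKa₂ hKb₁ hKb₂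
          hequ heqv j hjk x hx
      have hbdu : ∀ j ≤ k,
          |iteratedDerivWithin j u (Icc 0 ℓ) x| ≤ M * ξ ^ j * (|u x| + |v x|) :=
        fun j hjk => le_trans (le_add_of_nonneg_right (abs_nonneg _)) (hcomb j hjk)
      have hbdv : ∀ j ≤ k,
          |iteratedDerivWithin j v (Icc 0 ℓ) x| ≤ M * ξ ^ j * (|u x| + |v x|) :=
        fun j hjk => le_trans (le_add_of_nonneg_left (abs_nonneg _)) (hcomb j hjk)
      have htop : ∀ n : ℕ, ((n : WithTop ℕ∞) ≤ ((⊤ : ℕ∞) : WithTop ℕ∞)) := by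
        intro n; exact_mod_cast le_top
      -- splitting the (k+1)-st derivative of u
      have heu : iteratedDerivWithin (k + 1) u (Icc 0 ℓ) x =
          iteratedDerivWithin k (fun y => a₁ y * u y) (Icc 0 ℓ) x +
            iteratedDerivWithin k (fun y => a₂ y * v y) (Icc 0 ℓ) x := by
        rw [iteratedDerivWithin_succ',
          iteratedDerivWithin_congr (fun y hy => hequ y hy) hx]
        exact iteratedDerivWithin_fun_add hx hu (((ha₁.mul hcu).of_le (htop k)) x hx)
          (((ha₂.mul hcv).of_le (htop k)) x hx)
      have hev : iteratedDerivWithin (k + 1) v (Icc 0 ℓ) x =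
          iteratedDerivWithin k (fun y => b₁ y * u y) (Icc 0 ℓ) x +
            iteratedDerivWithin k (fun y => b₂ y * v y) (Icc 0 ℓ) x := by
        rw [iteratedDerivWithin_succ',
          iteratedDerivWithin_congr (fun y hy => heqv y hy) hx]
        exact iteratedDerivWithin_fun_add hx hu (((hb₁.mul hcu).of_le (htop k)) x hx)
          (((hb₂.mul hcv).of_le (htop k)) x hx)
      have h1 := hmain a₁ u ha₁ hcu hKa₁ hbdu
      have h2 := hmain a₂ v ha₂ hcv hKa₂ hbdv
      have h3 := hmain b₁ u hb₁ hcu hKb₁ hbdu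
      have h4 := hmain b₂ v hb₂ hcv hKb₂ hbdv
      have hu1 : |iteratedDerivWithin (k + 1) u (Icc 0 ℓ) x| ≤
          2 * (S * M * r ^ k * ξ ^ (k + 1) * (|u x| + |v x|)) := by
        rw [heu]
        calc |iteratedDerivWithin k (fun y => a₁ y * u y) (Icc 0 ℓ) x +
              iteratedDerivWithin k (fun y => a₂ y * v y) (Icc 0 ℓ) x| ≤
            |iteratedDerivWithin k (fun y => a₁ y * u y) (Icc 0 ℓ) x| +
              |iteratedDerivWithin k (fun y => a₂ y * v y) (Icc 0 ℓ) x| := abs_add_le _ _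
          _ ≤ 2 * (S * M * r ^ k * ξ ^ (k + 1) * (|u x| + |v x|)) := by linarith
      have hv1 : |iteratedDerivWithin (k + 1) v (Icc 0 ℓ) x| ≤
          2 * (S * M * r ^ k * ξ ^ (k + 1) * (|u x| + |v x|)) := by
        rw [hev]
        calc |iteratedDerivWithin k (fun y => b₁ y * u y) (Icc 0 ℓ) x +
              iteratedDerivWithin k (fun y => b₂ y * v y) (Icc 0 ℓ) x| ≤
            |iteratedDerivWithin k (fun y => b₁ y * u y) (Icc 0 ℓ) x| +
              |iteratedDerivWithin k (fun y => b₂ y * v y) (Icc 0 ℓ) x| := abs_add_le _ _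
          _ ≤ 2 * (S * M * r ^ k * ξ ^ (k + 1) * (|u x| + |v x|)) := by linarith
      have hpos : 0 ≤ ξ ^ (k + 1) * (|u x| + |v x|) :=
        mul_nonneg (pow_nonneg hξ0.le _) hT0
      calc |iteratedDerivWithin (k + 1) u (Icc 0 ℓ) x| +
            |iteratedDerivWithin (k + 1) v (Icc 0 ℓ) x| ≤
          4 * (S * M * r ^ k) * (ξ ^ (k + 1) * (|u x| + |v x|)) := by linarith
        _ ≤ (M + 4 * (S * M * r ^ k) + 1) * ξ ^ (k + 1) * (|u x| + |v x|) := by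
            nlinarith [hpos, hM.le]

/-- `L²` estimate from a pointwise bound `|f| ≤ c(|u|+|v|)`. -/
lemma L2_bound {ℓ : ℝ} (hℓ : 0 < ℓ) {f u v : ℝ → ℝ}
    (hf : ContinuousOn f (Icc 0 ℓ)) (hcu : ContinuousOn u (Icc 0 ℓ))
    (hcv : ContinuousOn v (Icc 0 ℓ)) {c : ℝ} (hc : 0 ≤ c)
    (hbd : ∀ x ∈ Icc (0 : ℝ) ℓ, |f x| ≤ c * (|u x| + |v x|)) :
    Real.sqrt (∫ x in (0 : ℝ)..ℓ, f x ^ 2) ≤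
      c * Real.sqrt 2 *
        (Real.sqrt (∫ x in (0 : ℝ)..ℓ, u x ^ 2) +
          Real.sqrt (∫ x in (0 : ℝ)..ℓ, v x ^ 2)) := by
  have hicc : uIcc (0 : ℝ) ℓ = Icc 0 ℓ := uIcc_of_le hℓ.le
  have hint : ∀ {h : ℝ → ℝ}, ContinuousOn h (Icc 0 ℓ) →
      IntervalIntegrable (fun x => h x ^ 2) MeasureTheory.volume 0 ℓ := by
    intro h hh
    apply ContinuousOn.intervalIntegrable
    rw [hicc]; exact hh.pow 2
  set a := ∫ x in (0 : ℝ)..ℓ, u x ^ 2 with hadef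
  set b := ∫ x in (0 : ℝ)..ℓ, v x ^ 2 with hbdef
  have ha0 : 0 ≤ a := intervalIntegral.integral_nonneg hℓ.le fun x _ => sq_nonneg _
  have hb0 : 0 ≤ b := intervalIntegral.integral_nonneg hℓ.le fun x _ => sq_nonneg _
  have i1 : IntervalIntegrable (fun x => 2 * u x ^ 2) MeasureTheory.volume 0 ℓ := by
    apply ContinuousOn.intervalIntegrable
    rw [hicc]; exact continuousOn_const.mul (hcu.pow 2)
  have i2 : IntervalIntegrable (fun x => 2 * v x ^ 2) MeasureTheory.volume 0 ℓ := by
    apply ContinuousOn.intervalIntegrable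
    rw [hicc]; exact continuousOn_const.mul (hcv.pow 2)
  have hstep : (∫ x in (0 : ℝ)..ℓ, f x ^ 2) ≤ c ^ 2 * (2 * a + 2 * b) := by
    have h1 : (∫ x in (0 : ℝ)..ℓ, f x ^ 2) ≤
        ∫ x in (0 : ℝ)..ℓ, c ^ 2 * (2 * u x ^ 2 + 2 * v x ^ 2) := by
      apply intervalIntegral.integral_mono_on hℓ.le (hint hf) ?_ ?_
      · apply ContinuousOn.intervalIntegrable
        rw [hicc]
        exact continuousOn_const.mul ((continuousOn_const.mul (hcu.pow 2)).add
          (continuousOn_const.mul (hcv.pow 2)))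
      · intro x hx
        have h2 := hbd x hx
        have h3 : f x ^ 2 ≤ (c * (|u x| + |v x|)) ^ 2 := by
          calc f x ^ 2 = |f x| ^ 2 := (sq_abs _).symm
            _ ≤ (c * (|u x| + |v x|)) ^ 2 := by
                exact pow_le_pow_left₀ (abs_nonneg _) h2 2
        refine h3.trans ?_
        nlinarith [sq_nonneg (|u x| - |v x|), sq_abs (u x), sq_abs (v x), sq_nonneg c,
          sq_nonneg (c * (|u x| - |v x|))]
    have h2 : (∫ x in (0 : ℝ)..ℓ, c ^ 2 * (2 * u x ^ 2 + 2 * v x ^ 2)) =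
        c ^ 2 * (2 * a + 2 * b) := by
      rw [intervalIntegral.integral_const_mul, intervalIntegral.integral_add i1 i2,
        intervalIntegral.integral_const_mul, intervalIntegral.integral_const_mul]
    rw [h2] at h1
    exact h1
  have key : 2 * a + 2 * b ≤ (Real.sqrt 2 * (Real.sqrt a + Real.sqrt b)) ^ 2 := by
    nlinarith [Real.sq_sqrt ha0, Real.sq_sqrt hb0,
      Real.sq_sqrt (by norm_num : (0 : ℝ) ≤ 2), Real.sqrt_nonneg a, Real.sqrt_nonneg b,
      mul_nonneg (Real.sqrt_nonneg a) (Real.sqrt_nonneg b), Real.sqrt_nonneg 2]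
  have h4 : Real.sqrt (2 * a + 2 * b) ≤ Real.sqrt 2 * (Real.sqrt a + Real.sqrt b) := by
    refine (Real.sqrt_le_sqrt key).trans ?_
    rw [Real.sqrt_sq (by positivity)]
  calc Real.sqrt (∫ x in (0 : ℝ)..ℓ, f x ^ 2) ≤ Real.sqrt (c ^ 2 * (2 * a + 2 * b)) :=
      Real.sqrt_le_sqrt hstep
    _ = c * Real.sqrt (2 * a + 2 * b) := by
        rw [Real.sqrt_mul (sq_nonneg c), Real.sqrt_sq hc]
    _ ≤ c * (Real.sqrt 2 * (Real.sqrt a + Real.sqrt b)) :=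
        mul_le_mul_of_nonneg_left h4 hc
    _ = c * Real.sqrt 2 * (Real.sqrt a + Real.sqrt b) := (mul_assoc _ _ _).symm

set_option maxHeartbeats 1600000 in
/-- Bootstrapped Sobolev bounds for solutions of the first-order system
`ω = μ|ξ|⁻¹ρ₀φ + gρ₀ψ`, `ω' = -μρ₀ψ - g|ξ|ρ₀φ`, `ω = P'(ρ₀)ρ₀(ψ' + |ξ|φ)` on `(0,ℓ)`,
with `-g|ξ| ≤ μ ≤ -(C₁/2)|ξ| < 0` and an `L²` bound `‖φ‖ + ‖ψ‖ ≤ A₀`: for every `k`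
there is `A_k > 0` independent of `|ξ|` with
`‖φ‖_{H^k} + ‖ψ‖_{H^k} ≤ A_k ∑_{j=0}^k |ξ|^j`. Here `W = P'(ρ₀)ρ₀`. -/
theorem sobolev_bounds_fixed_frequency
    (ℓ g C1 R1 A0 : ℝ) (hℓ : 0 < ℓ) (hg : 0 < g) (hC1 : 0 < C1) (hR1 : 0 < R1)
    (hA0 : 0 < A0)
    (ρ0 W : ℝ → ℝ)
    (hρsm : ContDiffOn ℝ (⊤ : ℕ∞) ρ0 (Icc 0 ℓ)) (hWsm : ContDiffOn ℝ (⊤ : ℕ∞) W (Icc 0 ℓ))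
    (c C w w' : ℝ) (hc : 0 < c) (hw : 0 < w)
    (hρbd : ∀ x ∈ Icc (0 : ℝ) ℓ, c ≤ ρ0 x ∧ ρ0 x ≤ C)
    (hWbd : ∀ x ∈ Icc (0 : ℝ) ℓ, w ≤ W x ∧ W x ≤ w') :
    ∀ k : ℕ, ∃ A : ℝ, 0 < A ∧
      ∀ (ξ μ : ℝ) (φ ψ ω : ℝ → ℝ),
        R1 ≤ ξ → -(g * ξ) ≤ μ → μ ≤ -(C1 / 2) * ξ →
        ContDiffOn ℝ (⊤ : ℕ∞) φ (Icc 0 ℓ) → ContDiffOn ℝ (⊤ : ℕ∞) ψ (Icc 0 ℓ) →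
        ContDiffOn ℝ (⊤ : ℕ∞) ω (Icc 0 ℓ) →
        (∀ x ∈ Icc (0 : ℝ) ℓ,
          ω x = W x * (derivWithin ψ (Icc 0 ℓ) x + ξ * φ x)) →
        (∀ x ∈ Icc (0 : ℝ) ℓ, ω x = μ / ξ * ρ0 x * φ x + g * ρ0 x * ψ x) →
        (∀ x ∈ Icc (0 : ℝ) ℓ,
          derivWithin ω (Icc 0 ℓ) x = -(μ * ρ0 x * ψ x) - g * ξ * ρ0 x * φ x) →
        HkNorm ℓ 0 φ + HkNorm ℓ 0 ψ ≤ A0 →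
        HkNorm ℓ k φ + HkNorm ℓ k ψ ≤ A * ∑ j ∈ Finset.range (k + 1), ξ ^ j := by
  intro k
  have hu : UniqueDiffOn ℝ (Icc (0 : ℝ) ℓ) := uniqueDiffOn_Icc hℓ
  have h0mem : (0 : ℝ) ∈ Icc (0 : ℝ) ℓ := ⟨le_refl _, hℓ.le⟩
  have hρne : ∀ x ∈ Icc (0 : ℝ) ℓ, ρ0 x ≠ 0 := fun x hx =>
    (lt_of_lt_of_le hc (hρbd x hx).1).ne'
  have hWne : ∀ x ∈ Icc (0 : ℝ) ℓ, W x ≠ 0 := fun x hx =>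
    (lt_of_lt_of_le hw (hWbd x hx).1).ne'
  have hρtop : ContDiffOn ℝ ((⊤ : ℕ∞) : WithTop ℕ∞) ρ0 (Icc 0 ℓ) := hρsm.of_le (by simp)
  have hWtop : ContDiffOn ℝ ((⊤ : ℕ∞) : WithTop ℕ∞) W (Icc 0 ℓ) := hWsm.of_le (by simp)
  have hdρ : ContDiffOn ℝ ((⊤ : ℕ∞) : WithTop ℕ∞) (derivWithin ρ0 (Icc 0 ℓ)) (Icc 0 ℓ) :=
    hρsm.derivWithin hu (by simp)
  set G : ℝ → ℝ := fun x => ρ0 x / W x with hGdef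
  set F : ℝ → ℝ := fun x => derivWithin ρ0 (Icc 0 ℓ) x / ρ0 x + g * G x with hFdef
  have hG : ContDiffOn ℝ ((⊤ : ℕ∞) : WithTop ℕ∞) G (Icc 0 ℓ) := hρtop.div hWtop hWne
  have hF : ContDiffOn ℝ ((⊤ : ℕ∞) : WithTop ℕ∞) F (Icc 0 ℓ) :=
    (hdρ.div hρtop hρne).add (contDiffOn_const.mul hG)
  -- uniform bounds for all derivatives of F and G
  have hFb : ∀ j : ℕ, ∃ D : ℝ, ∀ x ∈ Icc (0 : ℝ) ℓ,
      |iteratedDerivWithin j F (Icc 0 ℓ) x| ≤ D := by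
    intro j
    obtain ⟨D, hD⟩ := isCompact_Icc.exists_bound_of_continuousOn
      (hF.continuousOn_iteratedDerivWithin (by exact_mod_cast le_top) hu)
    exact ⟨D, fun x hx => by simpa [Real.norm_eq_abs] using hD x hx⟩
  have hGb : ∀ j : ℕ, ∃ D : ℝ, ∀ x ∈ Icc (0 : ℝ) ℓ,
      |iteratedDerivWithin j G (Icc 0 ℓ) x| ≤ D := by
    intro j
    obtain ⟨D, hD⟩ := isCompact_Icc.exists_bound_of_continuousOn
      (hG.continuousOn_iteratedDerivWithin (by exact_mod_cast le_top) hu)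
    exact ⟨D, fun x hx => by simpa [Real.norm_eq_abs] using hD x hx⟩
  choose DF hDF using hFb
  choose DG hDG using hGb
  have hDF0 : ∀ j, 0 ≤ DF j := fun j => le_trans (abs_nonneg _) (hDF j 0 h0mem)
  have hDG0 : ∀ j, 0 ≤ DG j := fun j => le_trans (abs_nonneg _) (hDG j 0 h0mem)
  have hDboth : ∀ j : ℕ, ∀ x ∈ Icc (0 : ℝ) ℓ,
      |iteratedDerivWithin j F (Icc 0 ℓ) x| ≤ DF j + DG j :=
    fun j x hx => le_trans (hDF j x hx) (le_add_of_nonneg_right (hDG0 j))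
  have hDboth' : ∀ j : ℕ, ∀ x ∈ Icc (0 : ℝ) ℓ,
      |iteratedDerivWithin j G (Icc 0 ℓ) x| ≤ DF j + DG j :=
    fun j x hx => le_trans (hDG j x hx) (le_add_of_nonneg_left (hDF0 j))
  set B : ℝ := 1 + g + 2 * g / C1 with hBdef
  have hB0 : (0 : ℝ) ≤ B := by rw [hBdef]; positivity
  set K : ℕ → ℝ := fun j => (1 + (1 + B) * (1 + (DF j + DG j))) * (1 + R1⁻¹) with hKdef
  have hK : ∀ j, 0 ≤ K j := by
    intro j
    show 0 ≤ (1 + (1 + B) * (1 + (DF j + DG j))) * (1 + R1⁻¹)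
    have h1 := hDF0 j
    have h2 := hDG0 j
    have h3 : (0 : ℝ) ≤ 1 + R1⁻¹ := by positivity
    have hf1 : (0 : ℝ) ≤ 1 + (1 + B) * (1 + (DF j + DG j)) := by nlinarith
    exact mul_nonneg hf1 h3
  obtain ⟨M, hM, hode⟩ := ode_pointwise_bound ℓ R1 hℓ hR1 K hK k
  refine ⟨2 * Real.sqrt 2 * M * A0, by positivity, ?_⟩
  intro ξ μ φ ψ ω hξ hμ1 hμ2 hφ hψ hω hω1 hω2 hω3 hL2
  have hξ0 : 0 < ξ := lt_of_lt_of_le hR1 hξ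
  have hμneg : μ < 0 := lt_of_le_of_lt hμ2 (by nlinarith)
  -- the first-order system for (φ, ψ)
  have eqψ : ∀ x ∈ Icc (0 : ℝ) ℓ, derivWithin ψ (Icc 0 ℓ) x =
      (fun y => -ξ + (μ / ξ) * G y) x * φ x + (fun y => 0 + g * G y) x * ψ x := by
    intro x hx
    have h := (hω1 x hx).symm.trans (hω2 x hx)
    have hWx := hWne x hx
    show derivWithin ψ (Icc 0 ℓ) x =
      (-ξ + μ / ξ * (ρ0 x / W x)) * φ x + (0 + g * (ρ0 x / W x)) * ψ x
    apply mul_left_cancel₀ hWx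
    have expand : W x * ((-ξ + μ / ξ * (ρ0 x / W x)) * φ x + (0 + g * (ρ0 x / W x)) * ψ x)
        = μ / ξ * ρ0 x * φ x + g * ρ0 x * ψ x - W x * (ξ * φ x) := by
      field_simp
      ring
    rw [expand]
    linarith [h]
  have eqφ : ∀ x ∈ Icc (0 : ℝ) ℓ, derivWithin φ (Icc 0 ℓ) x =
      (fun y => 0 + (-1) * F y) x * φ x + (fun y => -ξ + (-(g * ξ / μ)) * F y) x * ψ x := by
    intro x hx
    have hWx := hWne x hx
    have hρx := hρne x hx
    have hμ0 : μ ≠ 0 := hμneg.ne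
    have hξne : ξ ≠ 0 := hξ0.ne'
    have hdρx := ((hρtop.differentiableOn (by simp)) x hx).hasDerivWithinAt
    have hdφx := ((hφ.differentiableOn (by simp)) x hx).hasDerivWithinAt
    have hdψx := ((hψ.differentiableOn (by simp)) x hx).hasDerivWithinAt
    have h1 : HasDerivWithinAt (fun y => μ / ξ * ρ0 y * φ y + g * ρ0 y * ψ y)
        ((μ / ξ * derivWithin ρ0 (Icc 0 ℓ) x * φ x +
          μ / ξ * ρ0 x * derivWithin φ (Icc 0 ℓ) x) +
         (g * derivWithin ρ0 (Icc 0 ℓ) x * ψ x +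
          g * ρ0 x * derivWithin ψ (Icc 0 ℓ) x)) (Icc 0 ℓ) x :=
      ((hdρx.const_mul (μ / ξ)).mul hdφx).add ((hdρx.const_mul g).mul hdψx)
    have h2 : derivWithin ω (Icc 0 ℓ) x =
        (μ / ξ * derivWithin ρ0 (Icc 0 ℓ) x * φ x +
          μ / ξ * ρ0 x * derivWithin φ (Icc 0 ℓ) x) +
         (g * derivWithin ρ0 (Icc 0 ℓ) x * ψ x +
          g * ρ0 x * derivWithin ψ (Icc 0 ℓ) x) := by
      rw [derivWithin_congr (fun y hy => hω2 y hy) (hω2 x hx)]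
      exact h1.derivWithin (hu.uniqueDiffWithinAt hx)
    have E1 := h2.symm.trans (hω3 x hx)
    rw [eqψ x hx] at E1
    have hcan : μ / ξ * ρ0 x ≠ 0 := by
      apply mul_ne_zero _ hρx
      exact div_ne_zero hμneg.ne hξ0.ne'
    apply mul_left_cancel₀ hcan
    have hlin : μ / ξ * ρ0 x * derivWithin φ (Icc 0 ℓ) x =
        (-(μ * ρ0 x * ψ x) - g * ξ * ρ0 x * φ x) -
          (μ / ξ * derivWithin ρ0 (Icc 0 ℓ) x * φ x) -
          (g * derivWithin ρ0 (Icc 0 ℓ) x * ψ x +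
            g * ρ0 x * ((fun y => -ξ + (μ / ξ) * G y) x * φ x +
              (fun y => 0 + g * G y) x * ψ x)) := by linarith
    rw [hlin]
    simp only [hFdef, hGdef]
    field_simp
    ring
  -- pointwise bounds on all derivatives
  have hφ' : ContDiffOn ℝ ((⊤ : ℕ∞) : WithTop ℕ∞) φ (Icc 0 ℓ) := hφ.of_le (by simp)
  have hψ' : ContDiffOn ℝ ((⊤ : ℕ∞) : WithTop ℕ∞) ψ (Icc 0 ℓ) := hψ.of_le (by simp)
  have hca₁ : ContDiffOn ℝ ((⊤ : ℕ∞) : WithTop ℕ∞) (fun y => 0 + (-1) * F y) (Icc 0 ℓ) :=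
    contDiffOn_const.add (contDiffOn_const.mul hF)
  have hca₂ : ContDiffOn ℝ ((⊤ : ℕ∞) : WithTop ℕ∞)
      (fun y => -ξ + (-(g * ξ / μ)) * F y) (Icc 0 ℓ) :=
    contDiffOn_const.add (contDiffOn_const.mul hF)
  have hcb₁ : ContDiffOn ℝ ((⊤ : ℕ∞) : WithTop ℕ∞)
      (fun y => -ξ + (μ / ξ) * G y) (Icc 0 ℓ) :=
    contDiffOn_const.add (contDiffOn_const.mul hG)
  have hcb₂ : ContDiffOn ℝ ((⊤ : ℕ∞) : WithTop ℕ∞) (fun y => 0 + g * G y) (Icc 0 ℓ) :=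
    contDiffOn_const.add (contDiffOn_const.mul hG)
  have habs0 : |(0 : ℝ)| ≤ ξ := by simp [abs_of_nonneg, hξ0.le]
  have habsξ : |(-ξ)| ≤ ξ := by rw [abs_neg, abs_of_pos hξ0]
  have hgC1 : (0 : ℝ) ≤ 2 * g / C1 := by positivity
  have hd1 : |(-1 : ℝ)| ≤ B := by
    rw [abs_neg, abs_one, hBdef]; linarith
  have hd2 : |(-(g * ξ / μ))| ≤ B := by
    rw [abs_neg, abs_div, abs_of_pos (by positivity : (0 : ℝ) < g * ξ), abs_of_neg hμneg]
    rw [div_le_iff₀ (by linarith : (0 : ℝ) < -μ)]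
    have hB2 : 2 * g / C1 ≤ B := by rw [hBdef]; linarith [hg.le]
    have hmν : C1 / 2 * ξ ≤ -μ := by linarith
    calc g * ξ = (2 * g / C1) * (C1 / 2 * ξ) := by field_simp
      _ ≤ (2 * g / C1) * (-μ) := mul_le_mul_of_nonneg_left hmν hgC1
      _ ≤ B * (-μ) := mul_le_mul_of_nonneg_right hB2 (by linarith)
  have hd3 : |μ / ξ| ≤ B := by
    rw [abs_div, abs_of_pos hξ0, abs_of_neg hμneg, div_le_iff₀ hξ0]
    have hgB : g ≤ B := by rw [hBdef]; linarith
    calc -μ ≤ g * ξ := by linarith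
      _ ≤ B * ξ := mul_le_mul_of_nonneg_right hgB hξ0.le
  have hd4 : |g| ≤ B := by rw [abs_of_pos hg, hBdef]; linarith
  have hKa₁ : ∀ j : ℕ, ∀ x ∈ Icc (0 : ℝ) ℓ,
      |iteratedDerivWithin j (fun y => 0 + (-1) * F y) (Icc 0 ℓ) x| ≤ K j * ξ := by
    intro j x hx
    exact coeff_bound hℓ hF hDboth hR1 hξ habs0 hd1 j x hx
  have hKa₂ : ∀ j : ℕ, ∀ x ∈ Icc (0 : ℝ) ℓ,
      |iteratedDerivWithin j (fun y => -ξ + (-(g * ξ / μ)) * F y) (Icc 0 ℓ) x| ≤ K j * ξ := by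
    intro j x hx
    exact coeff_bound hℓ hF hDboth hR1 hξ habsξ hd2 j x hx
  have hKb₁ : ∀ j : ℕ, ∀ x ∈ Icc (0 : ℝ) ℓ,
      |iteratedDerivWithin j (fun y => -ξ + (μ / ξ) * G y) (Icc 0 ℓ) x| ≤ K j * ξ := by
    intro j x hx
    exact coeff_bound hℓ hG hDboth' hR1 hξ habsξ hd3 j x hx
  have hKb₂ : ∀ j : ℕ, ∀ x ∈ Icc (0 : ℝ) ℓ,
      |iteratedDerivWithin j (fun y => 0 + g * G y) (Icc 0 ℓ) x| ≤ K j * ξ := by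
    intro j x hx
    exact coeff_bound hℓ hG hDboth' hR1 hξ habs0 hd4 j x hx
  have hptw := hode ξ (fun y => 0 + (-1) * F y) (fun y => -ξ + (-(g * ξ / μ)) * F y)
    (fun y => -ξ + (μ / ξ) * G y) (fun y => 0 + g * G y) φ ψ hξ
    hca₁ hca₂ hcb₁ hcb₂ hφ' hψ' hKa₁ hKa₂ hKb₁ hKb₂ eqφ eqψ
  -- integrate
  have hA0' : Real.sqrt (∫ x in (0 : ℝ)..ℓ, φ x ^ 2) +
      Real.sqrt (∫ x in (0 : ℝ)..ℓ, ψ x ^ 2) ≤ A0 := by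
    simp only [HkNorm, Nat.zero_add, Finset.range_one, Finset.sum_singleton, iteratedDerivWithin_zero] at hL2
    exact hL2
  have hterm : ∀ j ∈ Finset.range (k + 1),
      Real.sqrt (∫ x in (0 : ℝ)..ℓ, (iteratedDerivWithin j φ (Icc 0 ℓ) x) ^ 2) +
        Real.sqrt (∫ x in (0 : ℝ)..ℓ, (iteratedDerivWithin j ψ (Icc 0 ℓ) x) ^ 2) ≤
      (2 * Real.sqrt 2 * M * A0) * ξ ^ j := by
    intro j hj
    have hjk : j ≤ k := Nat.lt_succ_iff.mp (Finset.mem_range.mp hj)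
    have hc0 : (0 : ℝ) ≤ M * ξ ^ j := mul_nonneg hM.le (pow_nonneg hξ0.le j)
    have hbφ : ∀ x ∈ Icc (0 : ℝ) ℓ, |iteratedDerivWithin j φ (Icc 0 ℓ) x| ≤
        (M * ξ ^ j) * (|φ x| + |ψ x|) := fun x hx =>
      le_trans (le_add_of_nonneg_right (abs_nonneg _)) (hptw j hjk x hx)
    have hbψ : ∀ x ∈ Icc (0 : ℝ) ℓ, |iteratedDerivWithin j ψ (Icc 0 ℓ) x| ≤
        (M * ξ ^ j) * (|φ x| + |ψ x|) := fun x hx =>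
      le_trans (le_add_of_nonneg_left (abs_nonneg _)) (hptw j hjk x hx)
    have hcφ : ContinuousOn (iteratedDerivWithin j φ (Icc 0 ℓ)) (Icc 0 ℓ) :=
      hφ.continuousOn_iteratedDerivWithin (by exact_mod_cast le_top) hu
    have hcψ : ContinuousOn (iteratedDerivWithin j ψ (Icc 0 ℓ)) (Icc 0 ℓ) :=
      hψ.continuousOn_iteratedDerivWithin (by exact_mod_cast le_top) hu
    have hcφ0 : ContinuousOn φ (Icc 0 ℓ) := hφ.continuousOn
    have hcψ0 : ContinuousOn ψ (Icc 0 ℓ) := hψ.continuousOn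
    have e1 := L2_bound hℓ hcφ hcφ0 hcψ0 hc0 hbφ
    have e2 := L2_bound hℓ hcψ hcφ0 hcψ0 hc0 hbψ
    have e3 : (M * ξ ^ j) * Real.sqrt 2 *
        (Real.sqrt (∫ x in (0 : ℝ)..ℓ, φ x ^ 2) +
          Real.sqrt (∫ x in (0 : ℝ)..ℓ, ψ x ^ 2)) ≤
        (M * ξ ^ j) * Real.sqrt 2 * A0 :=
      mul_le_mul_of_nonneg_left hA0' (by positivity)
    have e4 := e1.trans e3
    have e5 := e2.trans e3
    calc Real.sqrt (∫ x in (0 : ℝ)..ℓ, (iteratedDerivWithin j φ (Icc 0 ℓ) x) ^ 2) +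
          Real.sqrt (∫ x in (0 : ℝ)..ℓ, (iteratedDerivWithin j ψ (Icc 0 ℓ) x) ^ 2) ≤
        2 * ((M * ξ ^ j) * Real.sqrt 2 * A0) := by linarith
      _ = (2 * Real.sqrt 2 * M * A0) * ξ ^ j := by ring
  rw [HkNorm, HkNorm, ← Finset.sum_add_distrib]
  calc (∑ j ∈ Finset.range (k + 1),
        (Real.sqrt (∫ x in (0 : ℝ)..ℓ, (iteratedDerivWithin j φ (Icc 0 ℓ) x) ^ 2) +
         Real.sqrt (∫ x in (0 : ℝ)..ℓ, (iteratedDerivWithin j ψ (Icc 0 ℓ) x) ^ 2))) ≤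
      ∑ j ∈ Finset.range (k + 1), (2 * Real.sqrt 2 * M * A0) * ξ ^ j :=
      Finset.sum_le_sum hterm
    _ = (2 * Real.sqrt 2 * M * A0) * ∑ j ∈ Finset.range (k + 1), ξ ^ j :=
      (Finset.mul_sum _ _ _).symm
end
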